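/- arXiv:2103.10904 — 10 statements merged into one kernel-verified Lean document; each statement's English description precedes it below -/
import Mathlib

section
/- For every integer i ≥ 0, the gcd of the three consecutive odious numbers o_i, o_{i+1}, o_{i+2} equals 1, where o_n = 2n + 1 − t(n) and t(n) is the Thue–Morse sequence. -/
/-- The Thue–Morse sequence: parity of the binary digit sum of `n`. -/
def tm (n : ℕ) : ℕ := (Nat.digits 2 n).sum % 2

/-- The `n`-th odious number. -/
def odiousSeq (n : ℕ) : ℕ := 2 * n + 1 - tm n

lemma tm_le (n : ℕ) : tm n ≤ 1 := by
  unfold tm; omega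

lemma tm_two_mul (k : ℕ) : tm (2 * k) = tm k := by
  rcases Nat.eq_zero_or_pos k with h | h
  · subst h; rfl
  · unfold tm
    rw [Nat.digits_def' (by norm_num : 1 < 2) (by omega)]
    simp [Nat.mul_div_cancel_left _ (by norm_num : 0 < 2), Nat.mul_mod_right]

lemma tm_two_mul_add_one (k : ℕ) : tm (2 * k + 1) = 1 - tm k := by
  unfold tm
  rw [Nat.digits_def' (by norm_num : 1 < 2) (by omega)]
  have h1 : (2 * k + 1) % 2 = 1 := by omega
  have h2 : (2 * k + 1) / 2 = k := by omega
  rw [h1, h2]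
  simp only [List.sum_cons]
  omega

lemma odious_even (k : ℕ) : odiousSeq (2 * k) = 4 * k + 1 - tm k := by
  unfold odiousSeq
  rw [tm_two_mul]
  ring_nf

lemma odious_odd (k : ℕ) : odiousSeq (2 * k + 1) = 4 * k + 2 + tm k := by
  unfold odiousSeq
  rw [tm_two_mul_add_one]
  have := tm_le k
  omega

lemma gcd3_helper (a b c : ℕ) (h : ∀ d, d ∣ a → d ∣ b → d ∣ c → d ∣ 1) :
    Nat.gcd (Nat.gcd a b) c = 1 := by
  have h1 : Nat.gcd (Nat.gcd a b) c ∣ a :=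
    dvd_trans (Nat.gcd_dvd_left _ _) (Nat.gcd_dvd_left a b)
  have h2 : Nat.gcd (Nat.gcd a b) c ∣ b :=
    dvd_trans (Nat.gcd_dvd_left _ _) (Nat.gcd_dvd_right a b)
  have h3 : Nat.gcd (Nat.gcd a b) c ∣ c := Nat.gcd_dvd_right _ _
  exact Nat.dvd_one.mp (h _ h1 h2 h3)

theorem gcd_three_consecutive_odious (i : ℕ) :
    Nat.gcd (Nat.gcd (odiousSeq i) (odiousSeq (i + 1))) (odiousSeq (i + 2)) = 1 := by
  have tk : ∀ n, tm n ≤ 1 := tm_le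
  rcases Nat.even_or_odd i with ⟨k, hk⟩ | ⟨k, hk⟩
  · -- i = 2k : indices 2k, 2k+1, 2(k+1)
    have e0 : i = 2 * k := by omega
    have e1 : i + 1 = 2 * k + 1 := by omega
    have e2 : i + 2 = 2 * (k + 1) := by omega
    rw [e0, show 2 * k + 2 = 2 * (k + 1) from by ring,
      odious_even, odious_odd, odious_even]
    apply gcd3_helper
    intro d hd1 hd2 hd3
    have h0 := tk k; have h1 := tk (k + 1)
    interval_cases h : tm k
    · -- a = 4k+1, b = 4k+2
      have : d ∣ 1 := by
        have := Nat.dvd_sub hd2 hd1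
        simpa using this
      exact this
    · -- a = 4k, b = 4k+3
      have ha : d ∣ 4 * k := by
        have e : 4 * k + 1 - 1 = 4 * k := by omega
        rwa [e] at hd1
      have h3 : d ∣ 3 := by
        have := Nat.dvd_sub hd2 ha
        have e : 4 * k + 2 + 1 - 4 * k = 3 := by omega
        rwa [e] at this
      interval_cases h' : tm (k + 1)
      · -- c = 4k+5
        have h5 : d ∣ 5 := by
          have := Nat.dvd_sub hd3 ha
          have e : 4 * (k + 1) + 1 - 0 - 4 * k = 5 := by omega
          rwa [e] at this
        have : d ∣ Nat.gcd 3 5 := Nat.dvd_gcd h3 h5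
        simpa using this
      · -- c = 4k+4
        have h4 : d ∣ 4 := by
          have := Nat.dvd_sub hd3 ha
          have e : 4 * (k + 1) + 1 - 1 - 4 * k = 4 := by omega
          rwa [e] at this
        have : d ∣ Nat.gcd 3 4 := Nat.dvd_gcd h3 h4
        simpa using this
  · -- i = 2k+1 : indices 2k+1, 2(k+1), 2(k+1)+1
    have e0 : i = 2 * k + 1 := by omega
    have e1 : i + 1 = 2 * (k + 1) := by omega
    have e2 : i + 2 = 2 * (k + 1) + 1 := by omega
    rw [e0, show 2 * k + 1 + 1 = 2 * (k + 1) from by ring,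
      show 2 * k + 1 + 2 = 2 * (k + 1) + 1 from by ring,
      odious_odd, odious_even, odious_odd]
    apply gcd3_helper
    intro d hd1 hd2 hd3
    have h0 := tk k; have h1 := tk (k + 1)
    interval_cases h' : tm (k + 1)
    · -- b = 4k+5, c = 4k+6
      have : d ∣ 1 := by
        have := Nat.dvd_sub hd3 hd2
        have e : 4 * (k + 1) + 2 + 0 - (4 * (k + 1) + 1 - 0) = 1 := by omega
        rwa [e] at this
      exact this
    · -- b = 4k+4, c = 4k+7
      have h3 : d ∣ 3 := by
        have := Nat.dvd_sub hd3 hd2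
        have e : 4 * (k + 1) + 2 + 1 - (4 * (k + 1) + 1 - 1) = 3 := by omega
        rwa [e] at this
      interval_cases h : tm k
      · -- a = 4k+2, b = 4k+4 : d ∣ 2
        have h2 : d ∣ 2 := by
          have := Nat.dvd_sub hd2 hd1
          have e : 4 * (k + 1) + 1 - 1 - (4 * k + 2 + 0) = 2 := by omega
          rwa [e] at this
        have : d ∣ Nat.gcd 3 2 := Nat.dvd_gcd h3 h2
        simpa using this
      · -- a = 4k+3, b = 4k+4 : d ∣ 1
        have : d ∣ 1 := by
          have := Nat.dvd_sub hd2 hd1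
          have e : 4 * (k + 1) + 1 - 1 - (4 * k + 2 + 1) = 1 := by omega
          rwa [e] at this
        exact this
end

section
/- If n ≥ 1 can be written as a sum of four evil numbers each at least m, then n can be written as a sum of one, two, or three evil numbers each at least m. -/
/-!
Adding `2 ^ j` to a number whose bit `j` is clear flips the parity of its binary digit sum.
If `n` or one of the pair sums `a + b, …` is evil, one or three summands suffice, so assume all
of them are odious. For a pairing `n = s + t`, moving a bit of `s` that `t` lacks from `s` to `t`
makes both parts evil, and since `s, t ≥ 2m` both stay `≥ m` unless that bit is the leading bit
of `s`. So if two summands do not suffice, `s` and `t` differ only in their leading bits, and as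
`n` is odious this leaves only `s = t` or `{s, t} = {2^p + 2^k + r, 3·2^k + r}` with `r < 2^k`
and `k + 3 ≤ p`, a pair determined by `n`. For the three pairings of `a, b, c, d` this forces two
of the summands to coincide, say `a = b`, but then `a + b = 2a` is evil.
-/

/-- A natural number is evil if its binary digit sum is even. -/
def IsEvil (k : ℕ) : Prop := (Nat.digits 2 k).sum % 2 = 0

theorem sum_digits_two (x : ℕ) :
    (Nat.digits 2 x).sum = x % 2 + (Nat.digits 2 (x / 2)).sum := by
  rcases eq_or_ne x 0 with rfl | hx
  · simp
  · rw [Nat.digits_def' one_lt_two (Nat.pos_of_ne_zero hx), List.sum_cons]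

theorem sum_digits_two_add_two_pow {x j : ℕ} (h : x.testBit j = false) :
    (Nat.digits 2 (x + 2 ^ j)).sum = (Nat.digits 2 x).sum + 1 := by
  induction j generalizing x with
  | zero =>
    have hx : x % 2 = 0 := Nat.mod_two_eq_zero_iff_testBit_zero.mpr h
    rw [sum_digits_two (x + 2 ^ 0), sum_digits_two x]
    have hdiv : (x + 2 ^ 0) / 2 = x / 2 := by omega
    rw [hdiv]
    omega
  | succ j ih =>
    have hx : (x + 2 ^ (j + 1)) / 2 = x / 2 + 2 ^ j := by rw [pow_succ]; omega
    have hmod : (x + 2 ^ (j + 1)) % 2 = x % 2 := by rw [pow_succ]; omega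
    rw [sum_digits_two (x + 2 ^ (j + 1)), sum_digits_two x, hx, hmod,
      ih (by rwa [Nat.testBit_div_two])]
    omega

theorem isEvil_add_two_pow {x j : ℕ} (h : x.testBit j = false) :
    IsEvil (x + 2 ^ j) ↔ ¬IsEvil x := by
  unfold IsEvil
  rw [sum_digits_two_add_two_pow h]
  omega

theorem isEvil_two_mul (x : ℕ) : IsEvil (2 * x) ↔ IsEvil x := by
  unfold IsEvil
  rw [sum_digits_two (2 * x)]
  simp

theorem isEvil_add_two_pow_of_lt {x j : ℕ} (h : x < 2 ^ j) : IsEvil (x + 2 ^ j) ↔ ¬IsEvil x :=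
  isEvil_add_two_pow (Nat.testBit_lt_two_pow h)

theorem Nat.testBit_sub_two_pow_self {v j : ℕ} (h : v.testBit j = true) :
    (v - 2 ^ j).testBit j = false := by
  have := Nat.testBit_two_pow_add_eq (v - 2 ^ j) j
  rw [Nat.add_sub_cancel' (Nat.ge_two_pow_of_testBit h), h] at this
  simpa using this

theorem isEvil_sub_two_pow {v j : ℕ} (h : v.testBit j = true) :
    IsEvil (v - 2 ^ j) ↔ ¬IsEvil v := by
  have := isEvil_add_two_pow (Nat.testBit_sub_two_pow_self h)
  rw [Nat.sub_add_cancel (Nat.ge_two_pow_of_testBit h)] at this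
  tauto

def EvilSumTwo (m n : ℕ) : Prop :=
  ∃ a b : ℕ, IsEvil a ∧ IsEvil b ∧ m ≤ a ∧ m ≤ b ∧ n = a + b

def EvilSumThree (m n : ℕ) : Prop :=
  ∃ a b c : ℕ, IsEvil a ∧ IsEvil b ∧ IsEvil c ∧ m ≤ a ∧ m ≤ b ∧ m ≤ c ∧
    n = a + b + c

theorem evilSumTwo_add_of_testBit {m u v j : ℕ} (hu : ¬IsEvil u) (hv : ¬IsEvil v)
    (hju : u.testBit j = false) (hjv : v.testBit j = true) (hmu : m ≤ u) (hmv : m + 2 ^ j ≤ v) :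
    EvilSumTwo m (u + v) := by
  have hv' : 2 ^ j ≤ v := Nat.ge_two_pow_of_testBit hjv
  exact ⟨u + 2 ^ j, v - 2 ^ j, (isEvil_add_two_pow hju).mpr hu, (isEvil_sub_two_pow hjv).mpr hv,
    Nat.le_add_right_of_le hmu, by omega, by omega⟩

def ExtraBitIsLeading (s t : ℕ) : Prop :=
  ∀ j, s.testBit j = true → t.testBit j = false → s < 2 ^ (j + 1)

theorem extraBitIsLeading_of_not_evilSumTwo {m s t : ℕ} (hs : ¬IsEvil s) (ht : ¬IsEvil t)
    (hms : 2 * m ≤ s) (hmt : m ≤ t) (h : ¬EvilSumTwo m (t + s)) : ExtraBitIsLeading s t := by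
  intro j hjs hjt
  by_contra! hle
  rw [pow_succ] at hle
  exact h (evilSumTwo_add_of_testBit ht hs hjt hjs hmt (by omega))

theorem mod_two_pow_eq_of_extraBitIsLeading {s t N : ℕ} (hst : ExtraBitIsLeading s t)
    (hts : ExtraBitIsLeading t s) (hs : 2 ^ N ≤ s) (ht : 2 ^ N ≤ t) :
    s % 2 ^ N = t % 2 ^ N := by
  refine Nat.eq_of_testBit_eq fun i => ?_
  simp only [Nat.testBit_mod_two_pow]
  by_cases hi : i < N
  · have hpow : 2 ^ (i + 1) ≤ 2 ^ N := Nat.pow_le_pow_right two_pos hi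
    cases hsi : s.testBit i <;> cases hti : t.testBit i
    · rfl
    · exact absurd (hts i hti hsi) (by omega)
    · exact absurd (hst i hsi hti) (by omega)
    · rfl
  · simp [hi]

theorem sub_two_pow_log_lt_of_extraBitIsLeading {s t N : ℕ} (hst : ExtraBitIsLeading s t)
    (ht : t < 2 ^ N) : s - 2 ^ Nat.log 2 s < 2 ^ N := by
  by_contra! hN
  obtain ⟨j, hjN, hj⟩ := Nat.exists_ge_and_testBit_of_ge_two_pow hN
  set p := Nat.log 2 s
  have hs0 : s ≠ 0 := by rintro rfl; simp at hN
  have hp : 2 ^ p ≤ s := Nat.pow_log_le_self 2 hs0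
  have hps : s < 2 ^ (p + 1) := Nat.lt_pow_succ_log_self one_lt_two s
  have hjp : j < p := by
    by_contra! hpj
    have := Nat.ge_two_pow_of_testBit hj
    have := Nat.pow_le_pow_right two_pos hpj
    rw [pow_succ] at hps
    omega
  have hsj : s.testBit j = true := by
    rwa [← Nat.add_sub_cancel' hp, Nat.testBit_two_pow_add_gt hjp]
  have htj : t.testBit j = false :=
    Nat.testBit_lt_two_pow (ht.trans_le (Nat.pow_le_pow_right two_pos hjN))
  have := hst j hsj htj
  have : 2 ^ (j + 1) ≤ 2 ^ p := Nat.pow_le_pow_right two_pos hjp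
  omega

def IsExceptionalPair (A B : ℕ) : Prop :=
  ∃ p k r, k + 3 ≤ p ∧ r < 2 ^ k ∧ A = 2 ^ p + 2 ^ k + r ∧ B = 2 ^ (k + 1) + 2 ^ k + r

theorem isExceptionalPair_of_two_pow_add {p q r : ℕ} (hqp : q < p) (hr : r < 2 ^ q)
    (hre : IsEvil r) (hsum : ¬IsEvil (2 ^ p + r + (2 ^ q + r))) :
    IsExceptionalPair (2 ^ p + r) (2 ^ q + r) := by
  -- The sum `2 ^ p + 2 ^ q + 2 * r` is evil when `q = 0`, when `r < 2 ^ (q - 1)`, and when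
  -- `p = q + 1`; only the exceptional shape is left.
  obtain _ | k := q
  · obtain rfl : r = 0 := by simpa using hr
    have h1 : 1 < 2 ^ p := Nat.one_lt_two_pow (by omega)
    refine absurd ((isEvil_add_two_pow_of_lt h1).mpr (by norm_num [IsEvil])) ?_
    simpa [add_comm] using hsum
  have hk1 : 2 ^ (k + 1) = 2 * 2 ^ k := by ring
  have hk2 : 4 * 2 ^ k ≤ 2 ^ p := by
    have := Nat.pow_le_pow_right two_pos hqp
    rwa [show 2 ^ (k + 2) = 4 * 2 ^ k by ring] at this
  rcases lt_or_ge r (2 ^ k) with hrk | hrk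
  · refine absurd ?_ hsum
    rw [show 2 ^ p + r + (2 ^ (k + 1) + r) = 2 * r + 2 ^ (k + 1) + 2 ^ p by ring,
      isEvil_add_two_pow_of_lt (by omega), isEvil_add_two_pow_of_lt (by omega), isEvil_two_mul]
    exact not_not.mpr hre
  obtain ⟨r', rfl⟩ : ∃ r', r = r' + 2 ^ k := ⟨r - 2 ^ k, by omega⟩
  rcases lt_or_ge (k + 2) p with hkp | hkp
  · exact ⟨p, k, r', hkp, by omega, by ring, by ring⟩
  · obtain rfl : p = k + 2 := by omega
    refine absurd ?_ hsum
    have hk3 : 2 ^ (k + 3) = 8 * 2 ^ k := by ring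
    rw [show 2 ^ (k + 2) + (r' + 2 ^ k) + (2 ^ (k + 1) + (r' + 2 ^ k)) = 2 * r' + 2 ^ (k + 3) by
      ring, isEvil_add_two_pow_of_lt (by omega), isEvil_two_mul]
    rwa [isEvil_add_two_pow_of_lt (by omega)] at hre

theorem isExceptionalPair_of_extraBitIsLeading {s t : ℕ} (hst : ExtraBitIsLeading s t)
    (hts : ExtraBitIsLeading t s) (hlt : t < s) (hs : ¬IsEvil s) (ht : ¬IsEvil t)
    (hsum : ¬IsEvil (s + t)) : IsExceptionalPair s t := by
  have ht0 : t ≠ 0 := by rintro rfl; exact ht (by simp [IsEvil])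
  have hqp : Nat.log 2 t ≤ Nat.log 2 s := Nat.log_mono_right hlt.le
  have hs_ge : 2 ^ Nat.log 2 s ≤ s := Nat.pow_log_le_self 2 (by omega)
  have ht_ge : 2 ^ Nat.log 2 t ≤ t := Nat.pow_log_le_self 2 ht0
  have hs_lt : s < 2 ^ (Nat.log 2 s + 1) := Nat.lt_pow_succ_log_self one_lt_two s
  have ht_lt : t < 2 ^ (Nat.log 2 t + 1) := Nat.lt_pow_succ_log_self one_lt_two t
  have hmid := sub_two_pow_log_lt_of_extraBitIsLeading hst ht_lt
  have hlow := mod_two_pow_eq_of_extraBitIsLeading hst hts (ht_ge.trans hlt.le) ht_ge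
  generalize Nat.log 2 s = p at *
  generalize Nat.log 2 t = q at *
  obtain ⟨x, rfl⟩ : ∃ x, s = 2 ^ p + x := ⟨s - 2 ^ p, by omega⟩
  obtain ⟨y, rfl⟩ : ∃ y, t = 2 ^ q + y := ⟨t - 2 ^ q, by omega⟩
  rw [Nat.add_sub_cancel_left] at hmid
  rw [pow_succ] at hs_lt ht_lt hmid
  rw [Nat.add_mod_left, Nat.mod_eq_of_lt (show y < 2 ^ q by omega)] at hlow
  -- `x` has no bit above `q` and agrees with `y` below `q`.
  rcases hqp.lt_or_eq with hqp | rfl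
  · obtain ⟨c, hc⟩ : 2 ^ q ∣ 2 ^ p := pow_dvd_pow 2 hqp.le
    rw [hc, Nat.mul_add_mod] at hlow
    rcases lt_or_ge x (2 ^ q) with hx | hx
    · rw [Nat.mod_eq_of_lt hx] at hlow
      subst hlow
      have hxe : IsEvil x := by rwa [add_comm, isEvil_add_two_pow_of_lt hx, not_not] at ht
      exact isExceptionalPair_of_two_pow_add hqp hx hxe hsum
    · rw [Nat.mod_eq_sub_mod hx, Nat.mod_eq_of_lt (by omega)] at hlow
      have htp : 2 ^ q + y < 2 ^ p :=
        ht_lt.trans_le (by rw [← pow_succ]; exact Nat.pow_le_pow_right two_pos hqp)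
      refine absurd ?_ hs
      rw [show 2 ^ p + x = 2 ^ q + y + 2 ^ p by omega, isEvil_add_two_pow_of_lt htp]
      exact ht
  · rw [Nat.add_mod_left, Nat.mod_eq_of_lt (by omega)] at hlow
    omega

theorem eq_or_isExceptionalPair_of_not_evilSumTwo {m s t : ℕ} (hs : ¬IsEvil s) (ht : ¬IsEvil t)
    (hsum : ¬IsEvil (s + t)) (hms : 2 * m ≤ s) (hmt : 2 * m ≤ t) (h : ¬EvilSumTwo m (s + t)) :
    s = t ∨ IsExceptionalPair s t ∨ IsExceptionalPair t s := by
  have hst := extraBitIsLeading_of_not_evilSumTwo hs ht hms (by omega) (by rwa [add_comm])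
  have hts := extraBitIsLeading_of_not_evilSumTwo ht hs hmt (by omega) h
  rcases lt_trichotomy t s with hlt | rfl | hlt
  · exact Or.inr (Or.inl (isExceptionalPair_of_extraBitIsLeading hst hts hlt hs ht hsum))
  · exact Or.inl rfl
  · refine Or.inr (Or.inr (isExceptionalPair_of_extraBitIsLeading hts hst hlt ht hs ?_))
    rwa [add_comm]

theorem Nat.log_two_pow_add {p x : ℕ} (h : x < 2 ^ p) : Nat.log 2 (2 ^ p + x) = p :=
  Nat.log_eq_of_pow_le_of_lt_pow (by omega) (by rw [pow_succ]; omega)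

theorem IsExceptionalPair.left_eq {A B A' B' : ℕ} (h : IsExceptionalPair A B)
    (h' : IsExceptionalPair A' B') (hsum : A + B = A' + B') : A = A' := by
  obtain ⟨p, k, r, hkp, hr, rfl, rfl⟩ := h
  obtain ⟨p', k', r', hkp', hr', rfl, rfl⟩ := h'
  have hsplit : ∀ {p k r}, k + 3 ≤ p → r < 2 ^ k →
      2 ^ p + 2 ^ k + r + (2 ^ (k + 1) + 2 ^ k + r) = 2 ^ p + (2 ^ (k + 2) + 2 * r) ∧
        2 ^ (k + 2) + 2 * r < 2 ^ p ∧ 2 * r < 2 ^ (k + 2) := by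
    intro p k r hkp hr
    have hk3 := Nat.pow_le_pow_right two_pos hkp
    rw [show 2 ^ (k + 3) = 8 * 2 ^ k by ring] at hk3
    refine ⟨by ring, ?_, ?_⟩ <;> rw [show 2 ^ (k + 2) = 4 * 2 ^ k by ring] <;> omega
  obtain ⟨e, hlt, hr2⟩ := hsplit hkp hr
  obtain ⟨e', hlt', hr2'⟩ := hsplit hkp' hr'
  rw [e, e'] at hsum
  have hp : p = p' := by
    rw [← Nat.log_two_pow_add hlt, hsum, Nat.log_two_pow_add hlt']
  subst hp
  have hk : k + 2 = k' + 2 := by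
    rw [← Nat.log_two_pow_add hr2, ← Nat.log_two_pow_add hr2']
    congr 1
    omega
  obtain rfl : k = k' := by omega
  omega

theorem eq_or_eq_of_isExceptionalPair {s t s' t' : ℕ}
    (h : s = t ∨ IsExceptionalPair s t ∨ IsExceptionalPair t s)
    (h' : s' = t' ∨ IsExceptionalPair s' t' ∨ IsExceptionalPair t' s')
    (hsum : s + t = s' + t') : s = t ∨ s' = t' ∨ s = s' ∨ s = t' := by
  rcases h with h | h | h <;> rcases h' with h' | h' | h' <;>
    first | omega | (have := h.left_eq h' (by omega); omega)

theorem not_isEvil_add_of_not_evilSumThree {m n a b c d : ℕ} (hc : IsEvil c) (hd : IsEvil d)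
    (hma : m ≤ a) (hmc : m ≤ c) (hmd : m ≤ d) (hn : n = a + b + c + d)
    (h : ¬EvilSumThree m n) : ¬IsEvil (a + b) := fun hab =>
  h ⟨a + b, c, d, hab, hc, hd, by omega, hmc, hmd, by omega⟩

theorem ne_of_not_isEvil_add {a b : ℕ} (ha : IsEvil a) (h : ¬IsEvil (a + b)) : a ≠ b := by
  rintro rfl
  exact h (by rwa [← two_mul, isEvil_two_mul])

theorem pairing_eq_or_isExceptionalPair {m n a b c d : ℕ} (ha : IsEvil a) (hb : IsEvil b)
    (hc : IsEvil c) (hd : IsEvil d) (hma : m ≤ a) (hmb : m ≤ b) (hmc : m ≤ c) (hmd : m ≤ d)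
    (hn : n = a + b + c + d) (hodd : ¬IsEvil n) (h3 : ¬EvilSumThree m n)
    (h2 : ¬EvilSumTwo m n) :
    a ≠ b ∧ c ≠ d ∧ (a + b = c + d ∨ IsExceptionalPair (a + b) (c + d) ∨
      IsExceptionalPair (c + d) (a + b)) := by
  have hab := not_isEvil_add_of_not_evilSumThree hc hd hma hmc hmd hn h3
  have hcd := not_isEvil_add_of_not_evilSumThree ha hb hmc hma hmb (b := d) (by omega) h3
  have hn' : n = a + b + (c + d) := by omega
  exact ⟨ne_of_not_isEvil_add ha hab, ne_of_not_isEvil_add hc hcd,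
    eq_or_isExceptionalPair_of_not_evilSumTwo hab hcd (hn' ▸ hodd) (by omega) (by omega)
      (hn' ▸ h2)⟩

theorem evil_four_to_three_general (m n : ℕ)
    (h : ∃ a b c d : ℕ, IsEvil a ∧ IsEvil b ∧ IsEvil c ∧ IsEvil d ∧
      m ≤ a ∧ m ≤ b ∧ m ≤ c ∧ m ≤ d ∧ n = a + b + c + d) :
    (∃ a : ℕ, IsEvil a ∧ m ≤ a ∧ n = a) ∨
    (∃ a b : ℕ, IsEvil a ∧ IsEvil b ∧ m ≤ a ∧ m ≤ b ∧ n = a + b) ∨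
    (∃ a b c : ℕ, IsEvil a ∧ IsEvil b ∧ IsEvil c ∧ m ≤ a ∧ m ≤ b ∧ m ≤ c ∧
      n = a + b + c) := by
  obtain ⟨a, b, c, d, ha, hb, hc, hd, hma, hmb, hmc, hmd, hsum⟩ := h
  by_cases hodd : IsEvil n
  · exact Or.inl ⟨n, hodd, by omega, rfl⟩
  by_cases h3 : EvilSumThree m n
  · exact Or.inr (Or.inr h3)
  by_cases h2 : EvilSumTwo m n
  · exact Or.inr (Or.inl h2)
  exfalso
  obtain ⟨hab, hcd, P₁⟩ :=
    pairing_eq_or_isExceptionalPair ha hb hc hd hma hmb hmc hmd hsum hodd h3 h2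
  obtain ⟨hac, hbd, P₂⟩ :=
    pairing_eq_or_isExceptionalPair ha hc hb hd hma hmc hmb hmd (by omega) hodd h3 h2
  obtain ⟨had, hbc, P₃⟩ :=
    pairing_eq_or_isExceptionalPair ha hd hb hc hma hmd hmb hmc (by omega) hodd h3 h2
  have := eq_or_eq_of_isExceptionalPair P₁ P₂ (by omega)
  have := eq_or_eq_of_isExceptionalPair P₁ P₃ (by omega)
  have := eq_or_eq_of_isExceptionalPair P₂ P₃ (by omega)
  omega

theorem evil_four_to_three (m n : ℕ) (hn : 1 ≤ n)
    (h : ∃ a b c d : ℕ, IsEvil a ∧ IsEvil b ∧ IsEvil c ∧ IsEvil d ∧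
      m ≤ a ∧ m ≤ b ∧ m ≤ c ∧ m ≤ d ∧ n = a + b + c + d) :
    (∃ a : ℕ, IsEvil a ∧ m ≤ a ∧ n = a) ∨
    (∃ a b : ℕ, IsEvil a ∧ IsEvil b ∧ m ≤ a ∧ m ≤ b ∧ n = a + b) ∨
    (∃ a b c : ℕ, IsEvil a ∧ IsEvil b ∧ IsEvil c ∧ m ≤ a ∧ m ≤ b ∧ m ≤ c ∧
      n = a + b + c) :=
  evil_four_to_three_general m n h
end

section
/- If n ≥ 1 is a non-negative integer linear combination of evil numbers each at least m, then n can be written as a sum of one, two, or three evil numbers each at least m. -/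
instance : DecidablePred IsEvil := fun _ => inferInstanceAs (Decidable (_ = 0))

theorem Nat.digits_sum_add_base_mul {b d : ℕ} (x : ℕ) (hb : 1 < b) (hd : d < b) :
    (Nat.digits b (d + b * x)).sum = d + (Nat.digits b x).sum := by
  rcases Nat.eq_zero_or_pos d with rfl | hd0
  · rcases Nat.eq_zero_or_pos x with rfl | hx0
    · simp
    · rw [Nat.digits_add b hb 0 x hd (Or.inr hx0.ne'), List.sum_cons]
  · rw [Nat.digits_add b hb d x hd (Or.inl hd0.ne'), List.sum_cons]

theorem Nat.digits_sum_add_base_pow_mul {b r : ℕ} (k q : ℕ) (hb : 1 < b) (hr : r < b ^ k) :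
    (Nat.digits b (r + b ^ k * q)).sum = (Nat.digits b r).sum + (Nat.digits b q).sum := by
  induction k generalizing r with
  | zero => simp_all
  | succ k ih =>
    have hb0 : 0 < b := by omega
    have hr' : r / b < b ^ k := Nat.div_lt_of_lt_mul (by rwa [pow_succ, mul_comm] at hr)
    calc (Nat.digits b (r + b ^ (k + 1) * q)).sum
        = (Nat.digits b (r % b + b * (r / b + b ^ k * q))).sum := by
          rw [mul_add, ← add_assoc, Nat.mod_add_div, pow_succ, mul_comm _ b, mul_assoc]
      _ = r % b + ((Nat.digits b (r / b)).sum + (Nat.digits b q).sum) := by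
          rw [Nat.digits_sum_add_base_mul _ hb (Nat.mod_lt _ hb0), ih hr']
      _ = (Nat.digits b r).sum + (Nat.digits b q).sum := by
          conv_rhs =>
            rw [← Nat.mod_add_div r b, Nat.digits_sum_add_base_mul _ hb (Nat.mod_lt _ hb0)]
          ring

theorem isEvil_add_two_pow_mul_iff (k : ℕ) {r : ℕ} (q : ℕ) (hr : r < 2 ^ k) :
    IsEvil (r + 2 ^ k * q) ↔ (IsEvil r ↔ IsEvil q) := by
  unfold IsEvil
  rw [Nat.digits_sum_add_base_pow_mul k q one_lt_two hr]
  omega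

theorem IsEvil.three_le {k : ℕ} (hk : IsEvil k) (h0 : k ≠ 0) : 3 ≤ k := by
  by_contra! hlt
  obtain rfl | rfl : k = 1 ∨ k = 2 := by omega
  all_goals exact absurd hk (by decide)

theorem isEvil_two_mul_add_one_iff (u : ℕ) : IsEvil (2 * u + 1) ↔ ¬IsEvil (2 * u) := by
  have h₀ := isEvil_add_two_pow_mul_iff 1 u (r := 0) (by norm_num)
  have h₁ := isEvil_add_two_pow_mul_iff 1 u (r := 1) (by norm_num)
  rw [pow_one, zero_add, iff_true_left (by decide : IsEvil 0)] at h₀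
  rw [pow_one, add_comm, iff_false_left (by decide : ¬IsEvil 1)] at h₁
  rw [h₀, h₁]

theorem exists_le_two_isEvil_add_iff (p : ℕ) (P : Prop) : ∃ j ≤ 2, (IsEvil (p + j) ↔ P) := by
  obtain ⟨e, u, he, hpu⟩ : ∃ e u, e ≤ 1 ∧ p + e = 2 * u := ⟨p % 2, (p + 1) / 2, by omega, by omega⟩
  by_cases hP : IsEvil (2 * u) ↔ P
  · exact ⟨e, by omega, by rwa [hpu]⟩
  · exact ⟨e + 1, by omega, by rw [← add_assoc, hpu, isEvil_two_mul_add_one_iff]; tauto⟩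

theorem exists_isEvil_add_eight_mul (p : ℕ) {r : ℕ} (hr : r < 8) :
    ∃ j ≤ 2, IsEvil (r + 8 * (p + j)) := by
  obtain ⟨j, hj, h⟩ := exists_le_two_isEvil_add_iff p (IsEvil r)
  exact ⟨j, hj, (isEvil_add_two_pow_mul_iff 3 (p + j) hr).2 (by tauto)⟩

theorem exists_isEvil_add_eq_eight_mul_add_three (i : ℕ) :
    ∃ a b, IsEvil a ∧ IsEvil b ∧ 4 * i ≤ a ∧ 4 * i ≤ b ∧ a + b = 8 * i + 3 := by
  have block (r : ℕ) (hr : r < 2 ^ 2) := isEvil_add_two_pow_mul_iff 2 i hr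
  by_cases hi : IsEvil i
  · exact ⟨0 + 2 ^ 2 * i, 3 + 2 ^ 2 * i, (block 0 (by norm_num)).2 (iff_of_true (by decide) hi),
      (block 3 (by norm_num)).2 (iff_of_true (by decide) hi), by omega, by omega, by omega⟩
  · exact ⟨1 + 2 ^ 2 * i, 2 + 2 ^ 2 * i, (block 1 (by norm_num)).2 (iff_of_false (by decide) hi),
      (block 2 (by norm_num)).2 (iff_of_false (by decide) hi), by omega, by omega, by omega⟩

theorem exists_isEvil_sum_three_of_hundred_le {s : ℕ} (hs : 100 ≤ s) :
    ∃ a b c, IsEvil a ∧ IsEvil b ∧ IsEvil c ∧ s / 4 ≤ a ∧ s / 4 ≤ b ∧ s / 4 ≤ c ∧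
      a + b + c = s := by
  set i₀ := (s / 4 + 3) / 4
  obtain ⟨j, hj, hc⟩ := exists_isEvil_add_eight_mul ((s - 3) / 8 - i₀ - 2) (r := (s - 3) % 8)
    (Nat.mod_lt _ (by norm_num))
  obtain ⟨a, b, ha, hb, hia, hib, hab⟩ := exists_isEvil_add_eq_eight_mul_add_three (i₀ + 2 - j)
  exact ⟨a, b, _, ha, hb, hc, by omega, by omega, by omega, by omega⟩

theorem exists_isEvil_sum_three_of_lt_hundred {s : ℕ} (hs : 12 ≤ s) (hs' : s < 100) :
    ∃ a b c, IsEvil a ∧ IsEvil b ∧ IsEvil c ∧ s / 4 ≤ a ∧ s / 4 ≤ b ∧ s / 4 ≤ c ∧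
      a + b + c = s := by
  -- searching over offsets above `s / 4` keeps the kernel computation small
  have search : ∀ s < 100, 12 ≤ s → ∃ x ≤ s, ∃ y ≤ s, IsEvil (s / 4 + x) ∧ IsEvil (s / 4 + y) ∧
      s / 4 + x + y ≤ s - 2 * (s / 4) ∧ IsEvil (s - 2 * (s / 4) - x - y) := by
    decide +kernel
  obtain ⟨x, -, y, -, hx, hy, hxy, hz⟩ := search s hs' hs
  exact ⟨_, _, _, hx, hy, hz, by omega, by omega, by omega, by omega⟩

theorem exists_isEvil_sum_three {s : ℕ} (hs : 12 ≤ s) :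
    ∃ a b c, IsEvil a ∧ IsEvil b ∧ IsEvil c ∧ s / 4 ≤ a ∧ s / 4 ≤ b ∧ s / 4 ≤ c ∧
      a + b + c = s :=
  (lt_or_ge s 100).elim (exists_isEvil_sum_three_of_lt_hundred hs)
    exists_isEvil_sum_three_of_hundred_le

theorem exists_sum_three_of_mem_closure {m n : ℕ}
    (h : n ∈ AddSubmonoid.closure {k : ℕ | IsEvil k ∧ m ≤ k}) :
    ∃ a b c, (a = 0 ∨ IsEvil a ∧ m ≤ a) ∧ (b = 0 ∨ IsEvil b ∧ m ≤ b) ∧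
      (c = 0 ∨ IsEvil c ∧ m ≤ c) ∧ n = a + b + c := by
  induction h using AddSubmonoid.closure_induction_left with
  | zero => exact ⟨0, 0, 0, by simp⟩
  | add_left x hx y _ ih =>
    obtain ⟨a, b, c, ha, hb, hc, rfl⟩ := ih
    obtain rfl | ha0 := eq_or_ne a 0
    · exact ⟨x, b, c, .inr hx, hb, hc, by ring⟩
    obtain rfl | hb0 := eq_or_ne b 0
    · exact ⟨a, x, c, ha, .inr hx, hc, by ring⟩
    obtain rfl | hc0 := eq_or_ne c 0
    · exact ⟨a, b, x, ha, hb, .inr hx, by ring⟩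
    obtain rfl | hx0 := eq_or_ne x 0
    · exact ⟨a, b, c, ha, hb, hc, by ring⟩
    obtain ⟨hxe, hmx⟩ := hx
    obtain ⟨hae, hma⟩ := ha.resolve_left ha0
    obtain ⟨hbe, hmb⟩ := hb.resolve_left hb0
    obtain ⟨hce, hmc⟩ := hc.resolve_left hc0
    have := IsEvil.three_le hxe hx0
    have := IsEvil.three_le hae ha0
    have := IsEvil.three_le hbe hb0
    have := IsEvil.three_le hce hc0
    obtain ⟨a', b', c', ha', hb', hc', h₁, h₂, h₃, hsum⟩ :=
      exists_isEvil_sum_three (s := x + (a + b + c)) (by omega)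
    exact ⟨a', b', c', .inr ⟨ha', by omega⟩, .inr ⟨hb', by omega⟩, .inr ⟨hc', by omega⟩, hsum.symm⟩

theorem evil_combination_to_three (m n : ℕ) (hn : 1 ≤ n)
    (h : n ∈ AddSubmonoid.closure {k : ℕ | IsEvil k ∧ m ≤ k}) :
    (∃ a : ℕ, IsEvil a ∧ m ≤ a ∧ n = a) ∨
    (∃ a b : ℕ, IsEvil a ∧ IsEvil b ∧ m ≤ a ∧ m ≤ b ∧ n = a + b) ∨
    (∃ a b c : ℕ, IsEvil a ∧ IsEvil b ∧ IsEvil c ∧ m ≤ a ∧ m ≤ b ∧ m ≤ c ∧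
      n = a + b + c) := by
  obtain ⟨a, b, c, ha, hb, hc, rfl⟩ := exists_sum_three_of_mem_closure h
  rcases ha with rfl | ha <;> rcases hb with rfl | hb <;> rcases hc with rfl | hc <;> grind
end

section
/- If n ≥ 1 is a non-negative integer linear combination of lower Wythoff numbers each at least m, then n can be written as a sum of one or two lower Wythoff numbers each at least m. -/
noncomputable def phi : ℝ := (1 + Real.sqrt 5) / 2

/-- A lower Wythoff number: a number of the form `⌊k·φ⌋` for `k ≥ 1`. -/
def IsLowerWythoff (x : ℕ) : Prop := ∃ k : ℕ, 1 ≤ k ∧ x = ⌊(k : ℝ) * phi⌋₊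

/-!
Since `⌊kφ⌋ = kφ - {kφ}`, the sum `⌊iφ⌋ + ⌊jφ⌋` is the lower Wythoff number `⌊(i + j)φ⌋` whenever
`{iφ} + {jφ} < 1`. Let `W` be the set of lower Wythoff numbers `⌊kφ⌋` with `k ≥ i₀`. It suffices
to show `W + W + W ⊆ W ∪ (W + W)`: then the additive closure of `W` lies in `{0} ∪ W ∪ (W + W)`,
and the lower bound `m` is handled by taking for `i₀` the smallest index involved.

For `n = ⌊iφ⌋ + ⌊jφ⌋ + ⌊kφ⌋` in which every pair of fractional parts sums to at least `1`, their
total `s` lies in `(1, 3)`, and `n = Nφ - t` with `t = s`, `N = i + j + k` (when `s < φ`) or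
`t = s - φ`, `N = i + j + k - 1` (when `s > φ`). For `t < 1` this says `n = ⌊Nφ⌋`. For
`1 < t < φ` the orbit of rotation by `φ` leaves no gap longer than `2 - φ < 2 - t`, so some `p`
among three consecutive indices has `{pφ} > t - 1`, and then `n = ⌊pφ⌋ + ⌊(N - p)φ⌋`.
-/

open Set Int
open scoped Pointwise

theorem AddSubmonoid.closure_subset_insert_zero_union_add {M : Type*} [AddMonoid M] {s : Set M}
    (h : s + s + s ⊆ s ∪ (s + s)) : (closure s : Set M) ⊆ insert 0 (s ∪ (s + s)) := by
  have h_add_right : (s ∪ (s + s)) + s ⊆ s ∪ (s + s) := by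
    rw [union_add]
    exact union_subset subset_union_right h
  have h_add : (s ∪ (s + s)) + (s ∪ (s + s)) ⊆ s ∪ (s + s) := by
    rw [add_union, ← add_assoc]
    exact union_subset h_add_right
      ((add_subset_add_right h_add_right).trans h_add_right)
  intro x hx
  induction hx using AddSubmonoid.closure_induction with
  | mem x hx => exact Or.inr (Or.inl hx)
  | zero => exact Or.inl rfl
  | add x y _ _ hx hy =>
    rcases hx with rfl | hx
    · simpa using hy
    rcases hy with rfl | hy
    · simpa using Or.inr hx
    exact Or.inr (h_add (add_mem_add hx hy))

theorem Nat.floor_add_of_fract_add_fract_lt_one {R : Type*} [CommRing R] [LinearOrder R]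
    [IsStrictOrderedRing R] [FloorRing R] {x y : R} (hx : 0 ≤ x) (hy : 0 ≤ y)
    (h : fract x + fract y < 1) : ⌊x + y⌋₊ = ⌊x⌋₊ + ⌊y⌋₊ := by
  rw [Nat.floor_eq_iff (add_nonneg hx hy)]
  have hx' := floor_add_fract x
  have hy' := floor_add_fract y
  push_cast
  rw [natCast_floor_eq_intCast_floor hx, natCast_floor_eq_intCast_floor hy]
  constructor <;> linarith [fract_nonneg x, fract_nonneg y]

namespace Real

open scoped goldenRatio

theorem three_halves_lt_goldenRatio : 3 / 2 < φ := by
  nlinarith [goldenRatio_sq, goldenRatio_pos]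

theorem goldenRatio_lt_five_thirds : φ < 5 / 3 := by
  nlinarith [goldenRatio_sq, goldenRatio_pos]

theorem fract_goldenRatio : fract φ = φ - 1 :=
  fract_eq_iff.2 ⟨by linarith [one_lt_goldenRatio], by linarith [goldenRatio_lt_two], 1,
    by push_cast; ring⟩

theorem fract_two_mul_goldenRatio : fract (2 * φ) = 2 * φ - 3 :=
  fract_eq_iff.2 ⟨by linarith [three_halves_lt_goldenRatio],
    by linarith [goldenRatio_lt_two], 3, by push_cast; ring⟩

theorem fract_add_goldenRatio (x : ℝ) :
    fract (x + φ) = fract x + (φ - 1) ∨ fract (x + φ) = fract x - (2 - φ) := by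
  obtain ⟨z, hz⟩ := fract_add x φ
  rw [fract_goldenRatio] at hz
  have hz_lt : (z : ℝ) < 1 := by
    linarith [fract_lt_one (x + φ), fract_nonneg x, three_halves_lt_goldenRatio]
  have hz_gt : (-2 : ℝ) < z := by
    linarith [fract_nonneg (x + φ), fract_lt_one x, goldenRatio_lt_two]
  obtain rfl | rfl : z = -1 ∨ z = 0 := by
    have : z < 1 := by exact_mod_cast hz_lt
    have : -2 < z := by exact_mod_cast hz_gt
    omega
  · right; push_cast at hz; linarith
  · left; push_cast at hz; linarith

theorem fract_natCast_succ_mul_goldenRatio (p : ℕ) :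
    fract (((p + 1 : ℕ) : ℝ) * φ) = fract (p * φ) + (φ - 1) ∨
      fract (((p + 1 : ℕ) : ℝ) * φ) = fract (p * φ) - (2 - φ) := by
  rw [Nat.cast_succ, add_one_mul]
  exact fract_add_goldenRatio _

/-- The points `pφ mod 1` for `p = p₀, p₀ + 1, p₀ + 2` cut the circle `ℝ/ℤ` into arcs of lengths
`2φ - 3`, `2 - φ`, `2 - φ`, so no longer interval misses all three. -/
theorem exists_fract_natCast_mul_goldenRatio_mem_Ioo (p₀ : ℕ) {l u : ℝ} (hl : 0 ≤ l)
    (hu : u ≤ 1) (hlu : 2 - φ < u - l) :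
    ∃ p, p₀ ≤ p ∧ p ≤ p₀ + 2 ∧ fract (p * φ) ∈ Ioo l u := by
  by_contra! h
  have miss (p : ℕ) (h₀ : p₀ ≤ p) (h₂ : p ≤ p₀ + 2) : fract (p * φ) ≤ l ∨ u ≤ fract (p * φ) := by
    by_contra! H
    exact h p h₀ h₂ H
  have step₁ := fract_natCast_succ_mul_goldenRatio p₀
  have step₂ := fract_natCast_succ_mul_goldenRatio (p₀ + 1)
  have := three_halves_lt_goldenRatio
  have := goldenRatio_lt_five_thirds
  have := fract_nonneg ((p₀ : ℝ) * φ)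
  have := fract_lt_one ((p₀ : ℝ) * φ)
  have := fract_nonneg (((p₀ + 1 : ℕ) : ℝ) * φ)
  have := fract_lt_one (((p₀ + 1 : ℕ) : ℝ) * φ)
  have := fract_nonneg (((p₀ + 1 + 1 : ℕ) : ℝ) * φ)
  have := fract_lt_one (((p₀ + 1 + 1 : ℕ) : ℝ) * φ)
  rcases step₁ with step₁ | step₁ <;> rcases step₂ with step₂ | step₂ <;>
    rcases miss p₀ le_rfl (by omega) with m₀ | m₀ <;>
    rcases miss (p₀ + 1) (by omega) (by omega) with m₁ | m₁ <;>
    rcases miss (p₀ + 1 + 1) (by omega) le_rfl with m₂ | m₂ <;>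
    linarith

theorem natCast_floor_natCast_mul_goldenRatio (k : ℕ) :
    (⌊(k : ℝ) * φ⌋₊ : ℝ) = k * φ - fract (k * φ) := by
  rw [natCast_floor_eq_intCast_floor (by positivity), self_sub_fract]

theorem floor_natCast_mul_goldenRatio_mono : Monotone fun k : ℕ => ⌊(k : ℝ) * φ⌋₊ :=
  fun _ _ h => Nat.floor_le_floor (by gcongr)

theorem natCast_mul_goldenRatio_ne_natCast {N : ℕ} (hN : N ≠ 0) (n : ℕ) : (N : ℝ) * φ ≠ n :=
  (goldenRatio_irrational.natCast_mul hN).ne_nat n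

theorem three_le_of_goldenRatio_sub_one_lt_fract {k : ℕ} (h : φ - 1 < fract ((k : ℝ) * φ)) :
    3 ≤ k := by
  by_contra! hk
  interval_cases k
  · simp only [Nat.cast_zero, zero_mul, fract_zero] at h
    linarith [one_lt_goldenRatio]
  · simp only [Nat.cast_one, one_mul, fract_goldenRatio, lt_self_iff_false] at h
  · rw [Nat.cast_ofNat, fract_two_mul_goldenRatio] at h
    linarith [goldenRatio_lt_two]

theorem exists_floor_add_floor_eq_of_eq_mul_goldenRatio_sub {n N : ℕ} {t : ℝ} (p₀ : ℕ)
    (hN : p₀ + 2 ≤ N) (hn : (n : ℝ) = N * φ - t) (ht : 1 < t) (htφ : t < φ) :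
    ∃ p q, p₀ ≤ p ∧ p ≤ p₀ + 2 ∧ p + q = N ∧ ⌊(p : ℝ) * φ⌋₊ + ⌊(q : ℝ) * φ⌋₊ = n := by
  obtain ⟨p, hp₀, hp₂, hp_lo, hp_hi⟩ :=
    exists_fract_natCast_mul_goldenRatio_mem_Ioo p₀ (l := t - 1) (u := 1) (by linarith) le_rfl
      (by linarith)
  obtain ⟨q, rfl⟩ : ∃ q, N = p + q := ⟨N - p, by omega⟩
  refine ⟨p, q, hp₀, hp₂, rfl, ?_⟩
  set a := ⌊(p : ℝ) * φ⌋₊ + ⌊(q : ℝ) * φ⌋₊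
  -- `a - n = t - fract (pφ) - fract (qφ)` is an integer in `(-1, 1)`
  have ha : (a : ℝ) = n + t - fract ((p : ℝ) * φ) - fract ((q : ℝ) * φ) := by
    push_cast [a, natCast_floor_natCast_mul_goldenRatio] at hn ⊢
    linear_combination -hn
  have hlt : (a : ℝ) < n + 1 := by linarith [fract_nonneg ((q : ℝ) * φ)]
  have hgt : (n : ℝ) < a + 1 := by linarith [fract_lt_one ((q : ℝ) * φ)]
  have : a < n + 1 := by exact_mod_cast hlt
  have : n < a + 1 := by exact_mod_cast hgt
  omega

end Real

open Real
open scoped goldenRatio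

def lowerWythoffFrom (i₀ : ℕ) : Set ℕ := {a | ∃ k, i₀ ≤ k ∧ ⌊(k : ℝ) * φ⌋₊ = a}

def lowerWythoffAtLeast (m : ℕ) : Set ℕ := {a | IsLowerWythoff a ∧ m ≤ a}

theorem floor_add_floor_mem_lowerWythoffFrom {i₀ i j : ℕ} (hi : i₀ ≤ i)
    (h : fract ((i : ℝ) * φ) + fract ((j : ℝ) * φ) < 1) :
    ⌊(i : ℝ) * φ⌋₊ + ⌊(j : ℝ) * φ⌋₊ ∈ lowerWythoffFrom i₀ :=
  ⟨i + j, by omega, by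
    rw [Nat.cast_add, add_mul]
    exact Nat.floor_add_of_fract_add_fract_lt_one (by positivity) (by positivity) h⟩

theorem floor_add_floor_add_floor_mem_lowerWythoffFrom {i₀ i j k : ℕ} (h₀ : 1 ≤ i₀)
    (hi : i₀ ≤ i) (hj : i₀ ≤ j) (hk : i₀ ≤ k)
    (hij : 1 ≤ fract ((i : ℝ) * φ) + fract ((j : ℝ) * φ))
    (hik : 1 ≤ fract ((i : ℝ) * φ) + fract ((k : ℝ) * φ))
    (hjk : 1 ≤ fract ((j : ℝ) * φ) + fract ((k : ℝ) * φ)) :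
    ⌊(i : ℝ) * φ⌋₊ + ⌊(j : ℝ) * φ⌋₊ + ⌊(k : ℝ) * φ⌋₊ ∈
      lowerWythoffFrom i₀ ∪ (lowerWythoffFrom i₀ + lowerWythoffFrom i₀) := by
  set n := ⌊(i : ℝ) * φ⌋₊ + ⌊(j : ℝ) * φ⌋₊ + ⌊(k : ℝ) * φ⌋₊
  set s := fract ((i : ℝ) * φ) + fract ((j : ℝ) * φ) + fract ((k : ℝ) * φ)
  have hi₁ := fract_lt_one ((i : ℝ) * φ)
  have hj₁ := fract_lt_one ((j : ℝ) * φ)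
  have hk₁ := fract_lt_one ((k : ℝ) * φ)
  have hn : (n : ℝ) = (i + j + k : ℕ) * φ - s := by
    push_cast [n, s, natCast_floor_natCast_mul_goldenRatio]
    ring
  rcases lt_or_ge s φ with hs | hs
  · have hN : i₀ + 2 + i₀ ≤ i + j + k := by
      have : ¬(i = 1 ∧ j = 1 ∧ k = 1) := by
        rintro ⟨rfl, rfl, rfl⟩
        simp only [s, Nat.cast_one, one_mul, fract_goldenRatio] at hs
        linarith [three_halves_lt_goldenRatio]
      omega
    obtain ⟨p, q, hp, hp₂, hpq, hpqn⟩ :=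
      exists_floor_add_floor_eq_of_eq_mul_goldenRatio_sub i₀ (by omega) hn (by linarith) hs
    exact Or.inr (hpqn ▸ add_mem_add ⟨p, hp, rfl⟩ ⟨q, by omega, rfl⟩)
  have hn' : (n : ℝ) = (i + j + k - 1 : ℕ) * φ - (s - φ) := by
    rw [Nat.cast_sub (by omega)]
    push_cast at hn ⊢
    linarith
  rcases lt_trichotomy (s - φ) 1 with ht | ht | ht
  · refine Or.inl ⟨i + j + k - 1, by omega, (Nat.floor_eq_iff (by positivity)).2 ⟨?_, ?_⟩⟩ <;>
      linarith
  · rw [ht] at hn'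
    exact (natCast_mul_goldenRatio_ne_natCast (N := i + j + k - 1) (by omega) (n + 1)
      (by push_cast; linarith)).elim
  · have hj₃ := three_le_of_goldenRatio_sub_one_lt_fract (k := j) (by linarith)
    have hk₃ := three_le_of_goldenRatio_sub_one_lt_fract (k := k) (by linarith)
    obtain ⟨p, q, hp, hp₂, hpq, hpqn⟩ := exists_floor_add_floor_eq_of_eq_mul_goldenRatio_sub i₀
      (by omega) hn' ht (by linarith [three_halves_lt_goldenRatio])
    exact Or.inr (hpqn ▸ add_mem_add ⟨p, hp, rfl⟩ ⟨q, by omega, rfl⟩)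

theorem lowerWythoffFrom_add_add_subset {i₀ : ℕ} (h₀ : 1 ≤ i₀) :
    lowerWythoffFrom i₀ + lowerWythoffFrom i₀ + lowerWythoffFrom i₀ ⊆
      lowerWythoffFrom i₀ ∪ (lowerWythoffFrom i₀ + lowerWythoffFrom i₀) := by
  rintro _ ⟨_, ⟨_, ⟨i, hi, rfl⟩, _, ⟨j, hj, rfl⟩, rfl⟩, _, ⟨k, hk, rfl⟩, rfl⟩
  beta_reduce
  by_cases hij : fract ((i : ℝ) * φ) + fract ((j : ℝ) * φ) < 1
  · exact Or.inr (add_mem_add (floor_add_floor_mem_lowerWythoffFrom hi hij) ⟨k, hk, rfl⟩)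
  by_cases hik : fract ((i : ℝ) * φ) + fract ((k : ℝ) * φ) < 1
  · rw [add_right_comm]
    exact Or.inr (add_mem_add (floor_add_floor_mem_lowerWythoffFrom hi hik) ⟨j, hj, rfl⟩)
  by_cases hjk : fract ((j : ℝ) * φ) + fract ((k : ℝ) * φ) < 1
  · rw [add_assoc]
    exact Or.inr (add_mem_add ⟨i, hi, rfl⟩ (floor_add_floor_mem_lowerWythoffFrom hj hjk))
  exact floor_add_floor_add_floor_mem_lowerWythoffFrom h₀ hi hj hk (not_lt.1 hij) (not_lt.1 hik)
    (not_lt.1 hjk)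

theorem lowerWythoffFrom_subset {m i₀ : ℕ} (h₀ : 1 ≤ i₀) (hm : m ≤ ⌊(i₀ : ℝ) * φ⌋₊) :
    lowerWythoffFrom i₀ ⊆ lowerWythoffAtLeast m := by
  rintro _ ⟨k, hk, rfl⟩
  exact ⟨⟨k, by omega, rfl⟩, hm.trans (floor_natCast_mul_goldenRatio_mono hk)⟩

theorem lowerWythoffAtLeast_add_add_subset (m : ℕ) :
    lowerWythoffAtLeast m + lowerWythoffAtLeast m + lowerWythoffAtLeast m ⊆
      lowerWythoffAtLeast m ∪ (lowerWythoffAtLeast m + lowerWythoffAtLeast m) := by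
  rintro _ ⟨_, ⟨_, ⟨⟨i, hi, rfl⟩, hmi⟩, _, ⟨⟨j, hj, rfl⟩, hmj⟩, rfl⟩, _, ⟨⟨k, hk, rfl⟩, hmk⟩, rfl⟩
  have hm : m ≤ ⌊((min i (min j k) : ℕ) : ℝ) * φ⌋₊ := by
    simp only [floor_natCast_mul_goldenRatio_mono.map_min]
    exact le_min hmi (le_min hmj hmk)
  have hW := lowerWythoffFrom_subset (by omega) hm
  exact union_subset_union hW (add_subset_add hW hW) (lowerWythoffFrom_add_add_subset (by omega)
    (add_mem_add (add_mem_add ⟨i, by omega, rfl⟩ ⟨j, by omega, rfl⟩) ⟨k, by omega, rfl⟩))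

theorem lower_wythoff_combination_to_two (m n : ℕ) (hn : 1 ≤ n)
    (h : n ∈ AddSubmonoid.closure {k : ℕ | IsLowerWythoff k ∧ m ≤ k}) :
    (∃ a : ℕ, IsLowerWythoff a ∧ m ≤ a ∧ n = a) ∨
    (∃ a b : ℕ, IsLowerWythoff a ∧ IsLowerWythoff b ∧ m ≤ a ∧ m ≤ b ∧ n = a + b) := by
  rcases AddSubmonoid.closure_subset_insert_zero_union_add (lowerWythoffAtLeast_add_add_subset m) h
    with rfl | ⟨ha, hma⟩ | ⟨a, ⟨ha, hma⟩, b, ⟨hb, hmb⟩, rfl⟩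
  · omega
  · exact Or.inl ⟨n, ha, hma, rfl⟩
  · exact Or.inr ⟨a, b, ha, hb, hma, hmb, rfl⟩
end

section
/- If n ≥ 1 is a non-negative integer linear combination of upper Wythoff numbers each at least m, where m ≥ 3, then n can be written as a sum of one, two, or three upper Wythoff numbers each at least m. -/
/-- An upper Wythoff number: a number of the form `⌊k·φ²⌋` for `k ≥ 1`. -/
def IsUpperWythoff (x : ℕ) : Prop := ∃ k : ℕ, 1 ≤ k ∧ x = ⌊(k : ℝ) * phi ^ 2⌋₊

/-!
Since `φ² = φ + 1`, `⌊kφ²⌋ = k + ⌊kφ⌋`. Let `k₀` be the least index with `⌊k₀φ²⌋ ≥ m`; as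
`⌊φ²⌋ = 2 < m`, `k₀ ≥ 2`, and the generators are exactly the values at indices `k ≥ k₀`. It
suffices to replace any four indices `≥ k₀` by at most three indices `≥ k₀` with the same total.
For indices `aᵢ` and an integer shift `d`,
`⌊(Σ aᵢ + d)φ⌋ = Σ ⌊aᵢφ⌋ + ⌊Σ {aᵢφ} + dφ⌋`,
so an exchange of indices is valid as soon as the fractional parts `{aᵢφ}` lie in suitable
intervals. Sort the four fractional parts `f₁ ≤ f₂ ≤ f₃ ≤ f₄` and let `S` be their sum. If
`f₁ + f₂ < 1` the two smallest indices merge; if `1 + φ ≤ S < 2 + φ` the four indices merge into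
their sum minus one; otherwise a few units are moved between indices, and the only indices that
could drop below `k₀` are `2`, `3` and `4`, whose fractional parts are excluded directly.
-/

open Real

lemma phi_sq : phi ^ 2 = phi + 1 := goldenRatio_sq

lemma phi_gt_d3 : 1.618 < phi := by
  have : (2.236 : ℝ) < √5 := by rw [Real.lt_sqrt (by norm_num)]; norm_num
  unfold phi; linarith

lemma phi_lt_d4 : phi < 1.6181 := by
  have : √5 < 2.2362 := by rw [Real.sqrt_lt' (by norm_num)]; norm_num
  unfold phi; linarith

/-- `⌊kφ²⌋` in the form `k + ⌊kφ⌋` (see `natCast_floor_mul_phi_sq`), on all of `ℤ` so that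
index arithmetic involves no truncated subtraction. -/
noncomputable def upperWythoff (k : ℤ) : ℤ := k + ⌊k * phi⌋

noncomputable def fractPhi (k : ℤ) : ℝ := Int.fract (k * phi)

lemma fractPhi_nonneg (k : ℤ) : 0 ≤ fractPhi k := Int.fract_nonneg _

lemma fractPhi_lt_one (k : ℤ) : fractPhi k < 1 := Int.fract_lt_one _

lemma upperWythoff_mono : Monotone upperWythoff := fun a b hab => by
  have : (a : ℝ) * phi ≤ b * phi :=
    mul_le_mul_of_nonneg_right (Int.cast_le.mpr hab) (by linarith [phi_gt_d3])
  have := Int.floor_mono this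
  unfold upperWythoff; omega

lemma upperWythoff_one : upperWythoff 1 = 2 := by
  have : ⌊phi⌋ = 1 :=
    Int.floor_eq_iff.mpr ⟨by norm_num; linarith [phi_gt_d3], by norm_num; linarith [phi_lt_d4]⟩
  simp [upperWythoff, this]

lemma self_le_upperWythoff {k : ℤ} (hk : 0 ≤ k) : k ≤ upperWythoff k := by
  have : 0 ≤ ⌊(k : ℝ) * phi⌋ :=
    Int.floor_nonneg.mpr (mul_nonneg (by exact_mod_cast hk) (by linarith [phi_gt_d3]))
  unfold upperWythoff; omega

lemma natCast_floor_mul_phi_sq (k : ℕ) : (⌊(k : ℝ) * phi ^ 2⌋₊ : ℤ) = upperWythoff k := by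
  rw [Int.natCast_floor_eq_floor (by positivity), phi_sq, mul_add_one, add_comm,
    ← Int.cast_natCast, Int.floor_intCast_add, upperWythoff]

lemma upperWythoff_sum_add (l : List ℤ) (d : ℤ) :
    upperWythoff (l.sum + d) =
      (l.map upperWythoff).sum + d + ⌊(l.map fractPhi).sum + d * phi⌋ := by
  induction l generalizing d with
  | nil => simp [upperWythoff]
  | cons a l ih =>
    have hsplit : (l.map fractPhi).sum + ((a + d : ℤ) : ℝ) * phi =
        ⌊(a : ℝ) * phi⌋ + (fractPhi a + (l.map fractPhi).sum + d * phi) := by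
      rw [fractPhi, ← Int.self_sub_floor]; push_cast; ring
    rw [List.sum_cons, show a + l.sum + d = l.sum + (a + d) by ring, ih, hsplit,
      Int.floor_intCast_add]
    simp only [List.map_cons, List.sum_cons, upperWythoff]
    ring

lemma upperWythoff_sum_add_of_mem_Ico (l : List ℤ) {d c : ℤ}
    (h : (l.map fractPhi).sum + d * phi ∈ Set.Ico (c : ℝ) (c + 1)) :
    upperWythoff (l.sum + d) = (l.map upperWythoff).sum + d + c := by
  rw [upperWythoff_sum_add, Int.floor_eq_iff.mpr h]

lemma upperWythoff_add_of_mem_Ico (a d c : ℤ)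
    (h : fractPhi a + d * phi ∈ Set.Ico (c : ℝ) (c + 1)) :
    upperWythoff (a + d) = upperWythoff a + d + c := by
  simpa using upperWythoff_sum_add_of_mem_Ico [a] (by simpa using h)

lemma upperWythoff_add_add_of_mem_Ico (a b d c : ℤ)
    (h : fractPhi a + fractPhi b + d * phi ∈ Set.Ico (c : ℝ) (c + 1)) :
    upperWythoff (a + b + d) = upperWythoff a + upperWythoff b + d + c := by
  simpa [add_assoc] using upperWythoff_sum_add_of_mem_Ico [a, b] (by simpa [add_assoc] using h)

lemma fractPhi_two : fractPhi 2 = 2 * phi - 3 := by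
  rw [fractPhi, Int.fract_eq_iff]
  exact ⟨by linarith [phi_gt_d3], by linarith [phi_lt_d4], 3, by push_cast; ring⟩

lemma fractPhi_three : fractPhi 3 = 3 * phi - 4 := by
  rw [fractPhi, Int.fract_eq_iff]
  exact ⟨by linarith [phi_gt_d3], by linarith [phi_lt_d4], 4, by push_cast; ring⟩

lemma fractPhi_four : fractPhi 4 = 4 * phi - 6 := by
  rw [fractPhi, Int.fract_eq_iff]
  exact ⟨by linarith [phi_gt_d3], by linarith [phi_lt_d4], 6, by push_cast; ring⟩

lemma four_le_of_fractPhi_mem_Ico {k : ℤ} (hk : 2 ≤ k)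
    (h : fractPhi k ∈ Set.Ico (phi - 1) (4 - 2 * phi)) : 4 ≤ k := by
  by_contra! hk'
  interval_cases k
  · linarith [h.1, fractPhi_two, phi_lt_d4]
  · linarith [h.2, fractPhi_three, phi_gt_d3]

lemma four_le_of_lt_fractPhi {k : ℤ} (hk : 2 ≤ k) (h : 3 * phi - 4 < fractPhi k) : 4 ≤ k := by
  by_contra! hk'
  interval_cases k
  · rw [fractPhi_two] at h; linarith [phi_gt_d3]
  · rw [fractPhi_three] at h; linarith

lemma five_le_or_five_le_of_one_le_fractPhi_add {p q : ℤ} (hp : 2 ≤ p) (hq : 2 ≤ q)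
    (hp' : fractPhi p < phi / 2) (hq' : fractPhi q < phi / 2)
    (h : 1 ≤ fractPhi p + fractPhi q) : 5 ≤ p ∨ 5 ≤ q := by
  by_contra! hpq
  obtain ⟨hp5, hq5⟩ := hpq
  interval_cases p <;> interval_cases q <;>
    simp only [fractPhi_two, fractPhi_three, fractPhi_four] at * <;>
    linarith [phi_gt_d3, phi_lt_d4]

section Exchange

variable (p q r s : ℤ)

lemma upperWythoff_add_of_fractPhi_add_lt_one (h : fractPhi p + fractPhi q < 1) :
    upperWythoff (p + q) = upperWythoff p + upperWythoff q := by
  simpa using upperWythoff_add_add_of_mem_Ico p q 0 0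
    ⟨by push_cast; linarith [fractPhi_nonneg p, fractPhi_nonneg q], by push_cast; linarith⟩

lemma upperWythoff_shift_two
    (hpq : fractPhi p + fractPhi q ∈ Set.Ico (2 * phi - 3) (2 * phi - 2))
    (hr : fractPhi r < 4 - 2 * phi) :
    upperWythoff (p + q - 2) + upperWythoff (r + 2) =
      upperWythoff p + upperWythoff q + upperWythoff r := by
  have e₁ := upperWythoff_add_add_of_mem_Ico p q (-2) (-3)
    ⟨by push_cast; linarith [hpq.1], by push_cast; linarith [hpq.2]⟩
  have e₂ := upperWythoff_add_of_mem_Ico r 2 3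
    ⟨by push_cast; linarith [fractPhi_nonneg r, phi_gt_d3], by push_cast; linarith⟩
  rw [sub_eq_add_neg]; linarith

lemma upperWythoff_shift_two_two
    (hpq : fractPhi p + fractPhi q ∈ Set.Ico (4 * phi - 6) (4 * phi - 5))
    (hr : fractPhi r < 4 - 2 * phi) (hs : fractPhi s < 4 - 2 * phi) :
    upperWythoff (p + q - 4) + upperWythoff (r + 2) + upperWythoff (s + 2) =
      upperWythoff p + upperWythoff q + upperWythoff r + upperWythoff s := by
  have e₁ := upperWythoff_add_add_of_mem_Ico p q (-4) (-6)
    ⟨by push_cast; linarith [hpq.1], by push_cast; linarith [hpq.2]⟩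
  have e₂ := upperWythoff_add_of_mem_Ico r 2 3
    ⟨by push_cast; linarith [fractPhi_nonneg r, phi_gt_d3], by push_cast; linarith⟩
  have e₃ := upperWythoff_add_of_mem_Ico s 2 3
    ⟨by push_cast; linarith [fractPhi_nonneg s, phi_gt_d3], by push_cast; linarith⟩
  rw [sub_eq_add_neg]; linarith

lemma upperWythoff_shift_five
    (hpq : fractPhi p + fractPhi q ∈ Set.Ico (5 * phi - 8) (5 * phi - 7))
    (hs : fractPhi s < 9 - 5 * phi) :
    upperWythoff (p + q - 5) + upperWythoff (s + 5) =
      upperWythoff p + upperWythoff q + upperWythoff s := by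
  have e₁ := upperWythoff_add_add_of_mem_Ico p q (-5) (-8)
    ⟨by push_cast; linarith [hpq.1], by push_cast; linarith [hpq.2]⟩
  have e₂ := upperWythoff_add_of_mem_Ico s 5 8
    ⟨by push_cast; linarith [fractPhi_nonneg s, phi_gt_d3, phi_lt_d4], by push_cast; linarith⟩
  rw [sub_eq_add_neg]; linarith

lemma upperWythoff_shift_one_one (hpq : phi ≤ fractPhi p + fractPhi q)
    (hr : 2 - phi ≤ fractPhi r) (hs : phi - 1 ≤ fractPhi s) :
    upperWythoff (p + q - 1) + upperWythoff (r + 1) + upperWythoff (s - 1) =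
      upperWythoff p + upperWythoff q + upperWythoff r + upperWythoff s := by
  have e₁ := upperWythoff_add_add_of_mem_Ico p q (-1) 0
    ⟨by push_cast; linarith,
      by push_cast; linarith [fractPhi_lt_one p, fractPhi_lt_one q, phi_gt_d3]⟩
  have e₂ := upperWythoff_add_of_mem_Ico r 1 2
    ⟨by push_cast; linarith, by push_cast; linarith [fractPhi_lt_one r, phi_lt_d4]⟩
  have e₃ := upperWythoff_add_of_mem_Ico s (-1) (-1)
    ⟨by push_cast; linarith, by push_cast; linarith [fractPhi_lt_one s, phi_gt_d3]⟩
  rw [sub_eq_add_neg, sub_eq_add_neg]; linarith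

lemma upperWythoff_sum_four_sub_one
    (h : fractPhi p + fractPhi q + fractPhi r + fractPhi s ∈ Set.Ico (1 + phi) (2 + phi)) :
    upperWythoff (p + q + r + s - 1) =
      upperWythoff p + upperWythoff q + upperWythoff r + upperWythoff s := by
  have e := upperWythoff_sum_add_of_mem_Ico [p, q, r, s] (d := -1) (c := 1)
    (by simpa [add_assoc] using ⟨by linarith [h.1], by linarith [h.2]⟩)
  simpa [add_assoc, sub_eq_add_neg] using e

lemma upperWythoff_shift_of_le_fractPhi (k : ℤ) (h : 4 - 2 * phi ≤ fractPhi k) :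
    upperWythoff (2 * k - 4) + upperWythoff (k + 2) + upperWythoff (k + 1) =
      4 * upperWythoff k := by
  have := fractPhi_lt_one k
  have e₁ := upperWythoff_add_add_of_mem_Ico k k (-4) (-5)
    ⟨by push_cast; linarith [phi_lt_d4], by push_cast; linarith [phi_gt_d3]⟩
  have e₂ := upperWythoff_add_of_mem_Ico k 2 4
    ⟨by push_cast; linarith, by push_cast; linarith [phi_lt_d4]⟩
  have e₃ := upperWythoff_add_of_mem_Ico k 1 2
    ⟨by push_cast; linarith [phi_lt_d4], by push_cast; linarith [phi_lt_d4]⟩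
  rw [two_mul, sub_eq_add_neg]; linarith

end Exchange

def IsSumOfAtMostThree (k₀ x : ℤ) : Prop :=
  ∃ l : List ℤ, l.length ≤ 3 ∧ (∀ j ∈ l, k₀ ≤ j) ∧ (l.map upperWythoff).sum = x

section Reduction

variable {k₀ p q r s : ℤ}

lemma IsSumOfAtMostThree.one (hp : k₀ ≤ p) : IsSumOfAtMostThree k₀ (upperWythoff p) :=
  ⟨[p], by simp, by simpa using hp, by simp⟩

lemma IsSumOfAtMostThree.three {x : ℤ} (a b c : ℤ) (ha : k₀ ≤ a) (hb : k₀ ≤ b) (hc : k₀ ≤ c)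
    (h : upperWythoff a + upperWythoff b + upperWythoff c = x) : IsSumOfAtMostThree k₀ x :=
  ⟨[a, b, c], by simp, by simp [ha, hb, hc], by
    simp only [List.map_cons, List.map_nil, List.sum_cons, List.sum_nil, add_zero, ← h]
    ring⟩

lemma isSumOfAtMostThree_of_lt_one_add_phi (hk₀ : 2 ≤ k₀)
    (hp : k₀ ≤ p) (hq : k₀ ≤ q) (hr : k₀ ≤ r) (hs : k₀ ≤ s)
    (hpq : fractPhi p ≤ fractPhi q) (hqr : fractPhi q ≤ fractPhi r)
    (hrs : fractPhi r ≤ fractPhi s) (h₁ : 1 ≤ fractPhi p + fractPhi q)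
    (hS : fractPhi p + fractPhi q + fractPhi r + fractPhi s < 1 + phi) :
    IsSumOfAtMostThree k₀ (upperWythoff p + upperWythoff q + upperWythoff r + upperWythoff s) := by
  have := phi_gt_d3; have := phi_lt_d4
  rcases lt_or_ge (fractPhi p + fractPhi q) (2 * phi - 2) with h₂ | h₂
  · rcases lt_or_ge (fractPhi r) (4 - 2 * phi) with h₃ | h₃
    · have e := upperWythoff_shift_two p q r ⟨by linarith, h₂⟩ h₃
      exact .three (p + q - 2) (r + 2) s (by omega) (by omega) hs (by linarith)
    · have h₅ := five_le_or_five_le_of_one_le_fractPhi_add (by omega) (by omega)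
        (by linarith) (by linarith) h₁
      have e := upperWythoff_shift_five p q s ⟨by linarith, by linarith⟩ (by linarith)
      exact .three (p + q - 5) (s + 5) r (by omega) (by omega) hr (by linarith)
  · have h₄ := four_le_of_fractPhi_mem_Ico (k := q) (by omega) ⟨by linarith, by linarith⟩
    have e := upperWythoff_shift_two_two p q r s ⟨by linarith, by linarith⟩ (by linarith)
      (by linarith)
    exact .three (p + q - 4) (r + 2) (s + 2) (by omega) (by omega) (by omega) (by linarith)

lemma isSumOfAtMostThree_of_two_add_phi_le (hk₀ : 2 ≤ k₀)
    (hp : k₀ ≤ p) (hq : k₀ ≤ q) (hr : k₀ ≤ r) (hs : k₀ ≤ s)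
    (hS : 2 + phi ≤ fractPhi p + fractPhi q + fractPhi r + fractPhi s) :
    IsSumOfAtMostThree k₀ (upperWythoff p + upperWythoff q + upperWythoff r + upperWythoff s) := by
  have := fractPhi_lt_one p; have := fractPhi_lt_one q
  have := fractPhi_lt_one r; have := fractPhi_lt_one s
  have := phi_gt_d3; have := phi_lt_d4
  by_cases hall : k₀ = p ∧ k₀ = q ∧ k₀ = r ∧ k₀ = s
  · obtain ⟨rfl, rfl, rfl, rfl⟩ := hall
    have h₄ := four_le_of_lt_fractPhi hk₀ (by linarith)
    have e := upperWythoff_shift_of_le_fractPhi k₀ (by linarith)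
    exact .three (2 * k₀ - 4) (k₀ + 2) (k₀ + 1) (by omega) (by omega) (by omega) (by linarith)
  · rcases (by omega : k₀ < p ∨ k₀ < q ∨ k₀ < r ∨ k₀ < s) with h | h | h | h
    · have e := upperWythoff_shift_one_one q r s p (by linarith) (by linarith) (by linarith)
      exact .three (q + r - 1) (s + 1) (p - 1) (by omega) (by omega) (by omega) (by linarith)
    · have e := upperWythoff_shift_one_one p r s q (by linarith) (by linarith) (by linarith)
      exact .three (p + r - 1) (s + 1) (q - 1) (by omega) (by omega) (by omega) (by linarith)
    · have e := upperWythoff_shift_one_one p q s r (by linarith) (by linarith) (by linarith)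
      exact .three (p + q - 1) (s + 1) (r - 1) (by omega) (by omega) (by omega) (by linarith)
    · have e := upperWythoff_shift_one_one p q r s (by linarith) (by linarith) (by linarith)
      exact .three (p + q - 1) (r + 1) (s - 1) (by omega) (by omega) (by omega) (by linarith)

lemma isSumOfAtMostThree_of_fractPhi_le (hk₀ : 2 ≤ k₀)
    (hp : k₀ ≤ p) (hq : k₀ ≤ q) (hr : k₀ ≤ r) (hs : k₀ ≤ s)
    (hpq : fractPhi p ≤ fractPhi q) (hqr : fractPhi q ≤ fractPhi r)
    (hrs : fractPhi r ≤ fractPhi s) :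
    IsSumOfAtMostThree k₀ (upperWythoff p + upperWythoff q + upperWythoff r + upperWythoff s) := by
  rcases lt_or_ge (fractPhi p + fractPhi q) 1 with h₁ | h₁
  · exact .three (p + q) r s (by omega) hr hs
      (by rw [upperWythoff_add_of_fractPhi_add_lt_one p q h₁])
  rcases lt_or_ge (fractPhi p + fractPhi q + fractPhi r + fractPhi s) (1 + phi) with hS | hS
  · exact isSumOfAtMostThree_of_lt_one_add_phi hk₀ hp hq hr hs hpq hqr hrs h₁ hS
  rcases lt_or_ge (fractPhi p + fractPhi q + fractPhi r + fractPhi s) (2 + phi) with hS' | hS'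
  · rw [← upperWythoff_sum_four_sub_one p q r s ⟨hS, hS'⟩]
    exact .one (by omega)
  · exact isSumOfAtMostThree_of_two_add_phi_le hk₀ hp hq hr hs hS'

end Reduction

lemma exists_shorter_of_four_le_length {k₀ : ℤ} (hk₀ : 2 ≤ k₀) {l : List ℤ}
    (hl : 4 ≤ l.length) (hmem : ∀ j ∈ l, k₀ ≤ j) :
    ∃ l' : List ℤ, l'.length < l.length ∧ (∀ j ∈ l', k₀ ≤ j) ∧
      (l'.map upperWythoff).sum = (l.map upperWythoff).sum := by
  have hperm := List.mergeSort_perm l (fun a b => decide (fractPhi a ≤ fractPhi b))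
  have hsorted := List.pairwise_mergeSort (le := fun a b => decide (fractPhi a ≤ fractPhi b))
    (fun _ _ _ h₁ h₂ => decide_eq_true ((of_decide_eq_true h₁).trans (of_decide_eq_true h₂)))
    (fun a b => by simpa using le_total _ _) l
  generalize l.mergeSort _ = t at hperm hsorted
  obtain _ | ⟨p, _ | ⟨q, _ | ⟨r, _ | ⟨s, rest⟩⟩⟩⟩ := t
  all_goals try
    (have := hperm.length_eq; simp only [List.length_cons, List.length_nil] at this; omega)
  have hmem' : ∀ j ∈ p :: q :: r :: s :: rest, k₀ ≤ j := fun j hj => hmem j (hperm.subset hj)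
  simp only [List.pairwise_cons, List.mem_cons, decide_eq_true_eq] at hsorted
  obtain ⟨t, ht, htmem, htsum⟩ := isSumOfAtMostThree_of_fractPhi_le hk₀
    (hmem' p (by simp)) (hmem' q (by simp)) (hmem' r (by simp)) (hmem' s (by simp))
    (hsorted.1 q (by simp)) (hsorted.2.1 r (by simp)) (hsorted.2.2.1 s (by simp))
  refine ⟨t ++ rest, ?_, ?_, ?_⟩
  · simp only [List.length_append, ← hperm.length_eq, List.length_cons]; omega
  · simp only [List.mem_append]
    rintro j (hj | hj)
    · exact htmem j hj
    · exact hmem' j (by simp [hj])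
  · rw [← (hperm.map upperWythoff).sum_eq]
    simp only [List.map_append, List.sum_append, htsum, List.map_cons, List.sum_cons]
    ring

lemma isSumOfAtMostThree_sum {k₀ : ℤ} (hk₀ : 2 ≤ k₀) (l : List ℤ) (hmem : ∀ j ∈ l, k₀ ≤ j) :
    IsSumOfAtMostThree k₀ (l.map upperWythoff).sum := by
  induction hn : l.length using Nat.strong_induction_on generalizing l with
  | _ n ih =>
    rcases le_or_gt l.length 3 with hl | hl
    · exact ⟨l, hl, hmem, rfl⟩
    · obtain ⟨l', hlen, hmem', hsum⟩ := exists_shorter_of_four_le_length hk₀ hl hmem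
      rw [← hsum]
      exact ih _ (hn ▸ hlen) l' hmem' rfl

lemma IsSumOfAtMostThree.add {k₀ x y : ℤ} (hk₀ : 2 ≤ k₀) (hx : IsSumOfAtMostThree k₀ x)
    (hy : IsSumOfAtMostThree k₀ y) : IsSumOfAtMostThree k₀ (x + y) := by
  obtain ⟨lx, -, hlx, rfl⟩ := hx
  obtain ⟨ly, -, hly, rfl⟩ := hy
  simpa using isSumOfAtMostThree_sum hk₀ (lx ++ ly)
    fun j hj => (List.mem_append.mp hj).elim (hlx j) (hly j)

lemma isSumOfAtMostThree_of_mem_closure {k₀ : ℤ} (hk₀ : 2 ≤ k₀) {S : Set ℕ}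
    (hS : ∀ x ∈ S, IsSumOfAtMostThree k₀ x) {n : ℕ} (hn : n ∈ AddSubmonoid.closure S) :
    IsSumOfAtMostThree k₀ n := by
  induction hn using AddSubmonoid.closure_induction with
  | mem x hx => exact hS x hx
  | zero => exact ⟨[], by simp, by simp, rfl⟩
  | add x y _ _ hx hy => exact_mod_cast hx.add hk₀ hy

lemma exists_image_upperWythoff_eq {m : ℕ} (hm : 3 ≤ m) :
    ∃ k₀ : ℤ, 2 ≤ k₀ ∧
      ((↑) : ℕ → ℤ) '' {x | IsUpperWythoff x ∧ m ≤ x} = upperWythoff '' Set.Ici k₀ := by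
  have hex : ∃ k : ℕ, (m : ℤ) ≤ upperWythoff k := ⟨m, self_le_upperWythoff (by positivity)⟩
  have h₂ : 2 ≤ Nat.find hex := by
    by_contra! h
    have := (Nat.find_spec hex).trans (upperWythoff_mono (Nat.cast_le.mpr (Nat.le_of_lt_succ h)))
    rw [Nat.cast_one, upperWythoff_one] at this
    omega
  refine ⟨Nat.find hex, by exact_mod_cast h₂, Set.ext fun x => ⟨?_, ?_⟩⟩
  · rintro ⟨y, ⟨⟨k, -, rfl⟩, hmy⟩, rfl⟩
    refine ⟨k, Set.mem_Ici.mpr (Nat.cast_le.mpr (Nat.find_min' hex ?_)),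
      (natCast_floor_mul_phi_sq k).symm⟩
    rw [← natCast_floor_mul_phi_sq]
    exact_mod_cast hmy
  · rintro ⟨k, hk, rfl⟩
    rw [Set.mem_Ici] at hk
    lift k to ℕ using by omega
    refine ⟨_, ⟨⟨k, by omega, rfl⟩, ?_⟩, natCast_floor_mul_phi_sq k⟩
    have := (Nat.find_spec hex).trans (upperWythoff_mono hk)
    rw [← natCast_floor_mul_phi_sq] at this
    exact_mod_cast this

theorem upper_wythoff_combination_to_three (m n : ℕ) (hm : 3 ≤ m) (hn : 1 ≤ n)
    (h : n ∈ AddSubmonoid.closure {k : ℕ | IsUpperWythoff k ∧ m ≤ k}) :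
    (∃ a : ℕ, IsUpperWythoff a ∧ m ≤ a ∧ n = a) ∨
    (∃ a b : ℕ, IsUpperWythoff a ∧ IsUpperWythoff b ∧ m ≤ a ∧ m ≤ b ∧ n = a + b) ∨
    (∃ a b c : ℕ, IsUpperWythoff a ∧ IsUpperWythoff b ∧ IsUpperWythoff c ∧
      m ≤ a ∧ m ≤ b ∧ m ≤ c ∧ n = a + b + c) := by
  obtain ⟨k₀, hk₀, hT⟩ := exists_image_upperWythoff_eq hm
  obtain ⟨t, ht, htmem, htsum⟩ := isSumOfAtMostThree_of_mem_closure hk₀ (fun x hx => by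
    obtain ⟨k, hk, hkx⟩ := hT ▸ Set.mem_image_of_mem _ hx
    exact hkx ▸ .one hk) h
  have hT' : ∀ j ∈ t, upperWythoff j ∈ ((↑) : ℕ → ℤ) '' {x | IsUpperWythoff x ∧ m ≤ x} :=
    fun j hj => hT ▸ Set.mem_image_of_mem _ (htmem j hj)
  rcases t with _ | ⟨a, _ | ⟨b, _ | ⟨c, _ | ⟨d, t⟩⟩⟩⟩ <;>
    simp only [List.map_cons, List.map_nil, List.sum_cons, List.sum_nil, add_zero,
      List.length_cons] at htsum ht
  · omega
  · obtain ⟨x, hx, hxa⟩ := hT' a (by simp)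
    exact .inl ⟨x, hx.1, hx.2, by omega⟩
  · obtain ⟨x, hx, hxa⟩ := hT' a (by simp)
    obtain ⟨y, hy, hyb⟩ := hT' b (by simp)
    exact .inr (.inl ⟨x, y, hx.1, hy.1, hx.2, hy.2, by omega⟩)
  · obtain ⟨x, hx, hxa⟩ := hT' a (by simp)
    obtain ⟨y, hy, hyb⟩ := hT' b (by simp)
    obtain ⟨z, hz, hzc⟩ := hT' c (by simp)
    exact .inr (.inr ⟨x, y, z, hx.1, hy.1, hz.1, hx.2, hy.2, hz.2, by omega⟩)
  · omega
end

section
/- For all n ≥ 1, the Frobenius number G_L(n) of the set {L_n, L_{n+1}, L_{n+2}, …} satisfies −3 ≤ G_L(n) − 2L_n ≤ 1, where L_n = ⌊nφ⌋ and φ = (1+√5)/2. -/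
/-- The lower Wythoff sequence. -/
noncomputable def lw (n : ℕ) : ℕ := ⌊(n : ℝ) * phi⌋₊

/-!
Write `L_j = jφ - {jφ}`. Since `3/2 < φ < 5/3`, consecutive terms differ by 1 or 2, two
consecutive differences are never both 1, and `L_{i+j} = L_i + L_j + 1` exactly when
`{(i+j)φ} < {iφ}`. A difference 2 at `L_t < L_{t+1}` forces `{(t+1)φ} < φ - 1`, while among
`n, n+1, n+2` some `i` has `{iφ} ≥ φ - 1`; so every gap value `L_{t+1} - 1 ≥ 2L_n + 2` is
`L_i + L_{t+1-i}` with both indices `≥ n` (or `L_n + L_{n+1}` when `t = 2n`), and every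
`m ≥ 2L_n + 2` is representable.
Conversely, below `2L_n` only `0` and the terms themselves are representable, and one of the
three numbers `2L_n - 3, 2L_n - 2, 2L_n - 1` is not a term.
-/

lemma three_halves_lt_phi : 3 / 2 < phi := by
  have h5 : Real.sqrt 5 ^ 2 = 5 := Real.sq_sqrt (by norm_num)
  unfold phi
  nlinarith [Real.sqrt_nonneg 5]

lemma phi_lt_five_thirds : phi < 5 / 3 := by
  have h5 : Real.sqrt 5 ^ 2 = 5 := Real.sq_sqrt (by norm_num)
  unfold phi
  nlinarith [Real.sqrt_nonneg 5]

/-- The fractional part of `j * phi`. -/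
noncomputable def lwFract (j : ℕ) : ℝ := j * phi - lw j

lemma cast_lw_eq (j : ℕ) : (lw j : ℝ) = j * phi - lwFract j := by
  unfold lwFract; ring

lemma lwFract_nonneg (j : ℕ) : 0 ≤ lwFract j :=
  sub_nonneg.2 <| Nat.floor_le <| by have := three_halves_lt_phi; positivity

lemma lwFract_lt_one (j : ℕ) : lwFract j < 1 := by
  have := Nat.lt_floor_add_one ((j : ℝ) * phi)
  unfold lwFract lw
  linarith

@[simp]
lemma lw_zero : lw 0 = 0 := by
  simp [lw]

lemma lw_lt_lw_succ (j : ℕ) : lw j < lw (j + 1) := by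
  have := cast_lw_eq j
  have := cast_lw_eq (j + 1)
  have := lwFract_nonneg j
  have := lwFract_lt_one (j + 1)
  have := three_halves_lt_phi
  push_cast at *
  exact_mod_cast (show (lw j : ℝ) < lw (j + 1) by linarith)

lemma lw_strictMono : StrictMono lw :=
  strictMono_nat_of_lt_succ lw_lt_lw_succ

lemma lw_succ_le (j : ℕ) : lw (j + 1) ≤ lw j + 2 := by
  have := cast_lw_eq j
  have := cast_lw_eq (j + 1)
  have := lwFract_lt_one j
  have := lwFract_nonneg (j + 1)
  have := phi_lt_five_thirds
  push_cast at *
  have : lw (j + 1) < lw j + 3 := by exact_mod_cast (show (lw (j + 1) : ℝ) < lw j + 3 by linarith)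
  omega

lemma lw_add_three_le (j : ℕ) : lw j + 3 ≤ lw (j + 2) := by
  have := cast_lw_eq j
  have := cast_lw_eq (j + 2)
  have := lwFract_nonneg j
  have := lwFract_lt_one (j + 2)
  have := three_halves_lt_phi
  push_cast at *
  have : lw j + 2 < lw (j + 2) := by exact_mod_cast (show (lw j : ℝ) + 2 < lw (j + 2) by linarith)
  omega

lemma lw_add_le (i j : ℕ) : lw (i + j) ≤ lw i + lw j + 1 := by
  have := cast_lw_eq i
  have := cast_lw_eq j
  have := cast_lw_eq (i + j)
  have := lwFract_lt_one i
  have := lwFract_lt_one j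
  have := lwFract_nonneg (i + j)
  push_cast at *
  have : lw (i + j) < lw i + lw j + 2 := by
    exact_mod_cast (show (lw (i + j) : ℝ) < lw i + lw j + 2 by linarith)
  omega

lemma lw_eq_lw_add_lw_sub_add_one {i k : ℕ} (hik : i ≤ k) (h : lwFract k < lwFract i) :
    lw k = lw i + lw (k - i) + 1 := by
  obtain ⟨j, rfl⟩ := Nat.exists_eq_add_of_le hik
  rw [Nat.add_sub_cancel_left]
  have := cast_lw_eq i
  have := cast_lw_eq j
  have := cast_lw_eq (i + j)
  have := lwFract_nonneg j
  push_cast at *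
  have : lw i + lw j < lw (i + j) := by
    exact_mod_cast (show (lw i : ℝ) + lw j < lw (i + j) by linarith)
  have := lw_add_le i j
  omega

lemma lwFract_succ_lt_iff (j : ℕ) : lwFract (j + 1) < phi - 1 ↔ lw (j + 1) = lw j + 2 := by
  have := cast_lw_eq j
  have := cast_lw_eq (j + 1)
  have := lwFract_nonneg j
  have := lwFract_lt_one j
  push_cast at *
  rcases (by have := lw_lt_lw_succ j; have := lw_succ_le j; omega :
      lw (j + 1) = lw j + 1 ∨ lw (j + 1) = lw j + 2) with h | h
  · have : (lw (j + 1) : ℝ) = lw j + 1 := by exact_mod_cast h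
    exact iff_of_false (by linarith) (by omega)
  · have : (lw (j + 1) : ℝ) = lw j + 2 := by exact_mod_cast h
    exact iff_of_true (by linarith) h

lemma exists_phi_sub_one_le_lwFract (a : ℕ) :
    ∃ i, a ≤ i ∧ i ≤ a + 2 ∧ phi - 1 ≤ lwFract i := by
  by_contra! h
  have h₁ := (lwFract_succ_lt_iff a).1 (h (a + 1) (by omega) (by omega))
  have h₂ : lw (a + 2) = lw (a + 1) + 2 :=
    (lwFract_succ_lt_iff (a + 1)).1 (h (a + 2) (by omega) (by omega))
  have hgap : (lw (a + 2) : ℝ) = lw a + 4 := by exact_mod_cast (by omega : lw (a + 2) = lw a + 4)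
  have := cast_lw_eq a
  have := cast_lw_eq (a + 2)
  have := lwFract_nonneg (a + 2)
  have := h a le_rfl (by omega)
  have := phi_lt_five_thirds
  push_cast at *
  linarith

lemma exists_lw_le_lt_lw_succ (m : ℕ) : ∃ t, lw t ≤ m ∧ m < lw (t + 1) := by
  induction m with
  | zero => exact ⟨0, by simp, by simpa using lw_lt_lw_succ 0⟩
  | succ m ih =>
    obtain ⟨t, hlo, hhi⟩ := ih
    rcases (Nat.succ_le_of_lt hhi).lt_or_eq with h | h
    · exact ⟨t, by omega, h⟩
    · exact ⟨t + 1, h.ge, by have := lw_lt_lw_succ (t + 1); omega⟩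

lemma exists_notMem_range_lw (m : ℕ) : ∃ k, m ≤ k ∧ k ≤ m + 2 ∧ k ∉ Set.range lw := by
  by_contra! h
  obtain ⟨a, ha⟩ := h m le_rfl (by omega)
  obtain ⟨b, hb⟩ := h (m + 1) (by omega) (by omega)
  obtain ⟨c, hc⟩ := h (m + 2) (by omega) le_rfl
  have hab : a < b := lw_strictMono.lt_iff_lt.1 (by omega)
  have hbc : b < c := lw_strictMono.lt_iff_lt.1 (by omega)
  have := lw_strictMono.monotone (show a + 2 ≤ c by omega)
  have := lw_add_three_le a
  omega

def lwTail (n : ℕ) : Set ℕ := {x | ∃ j, n ≤ j ∧ x = lw j}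

lemma lw_mem_closure_lwTail {n j : ℕ} (hj : n ≤ j) : lw j ∈ AddSubmonoid.closure (lwTail n) :=
  AddSubmonoid.subset_closure ⟨j, hj, rfl⟩

lemma eq_zero_or_mem_or_le_of_mem_closure_lwTail {n m : ℕ}
    (hm : m ∈ AddSubmonoid.closure (lwTail n)) : m = 0 ∨ m ∈ lwTail n ∨ 2 * lw n ≤ m := by
  have ge_of_mem : ∀ {x}, x ∈ lwTail n → lw n ≤ x := by
    rintro _ ⟨j, hj, rfl⟩
    exact lw_strictMono.monotone hj
  induction hm using AddSubmonoid.closure_induction with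
  | mem x hx => exact .inr (.inl hx)
  | zero => exact .inl rfl
  | add x y _ _ ihx ihy =>
    have eq_zero_or_ge :
        ∀ {z}, (z = 0 ∨ z ∈ lwTail n ∨ 2 * lw n ≤ z) → z = 0 ∨ lw n ≤ z := by
      rintro z (h | h | h)
      exacts [.inl h, .inr (ge_of_mem h), .inr (by omega)]
    rcases eq_zero_or_ge ihx with rfl | hx
    · simpa using ihy
    rcases eq_zero_or_ge ihy with rfl | hy
    · simpa using ihx
    exact .inr (.inr (by omega))

lemma exists_eq_lw_add_lw_of_gap {n t : ℕ} (hgap : lw (t + 1) = lw t + 2)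
    (ht : 2 * n + 2 ≤ t + 1) : ∃ i j, n ≤ i ∧ n ≤ j ∧ lw t + 1 = lw i + lw j := by
  obtain ⟨i, hni, hin, hi⟩ := exists_phi_sub_one_le_lwFract n
  have hlt : lwFract (t + 1) < lwFract i := ((lwFract_succ_lt_iff t).2 hgap).trans_le hi
  have := lw_eq_lw_add_lw_sub_add_one (show i ≤ t + 1 by omega) hlt
  exact ⟨i, t + 1 - i, hni, by omega, by omega⟩

lemma mem_closure_lwTail_of_le {n m : ℕ} (hm : 2 * lw n + 2 ≤ m) :
    m ∈ AddSubmonoid.closure (lwTail n) := by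
  obtain ⟨t, hlo, hhi⟩ := exists_lw_le_lt_lw_succ m
  obtain rfl | hlt := hlo.eq_or_lt
  · exact lw_mem_closure_lwTail (lw_strictMono.le_iff_le.1 (by omega))
  have hgap : lw (t + 1) = lw t + 2 := by have := lw_succ_le t; omega
  have ht : n + n < t + 1 := lw_strictMono.lt_iff_lt.1 (by have := lw_add_le n n; omega)
  obtain ⟨i, j, hi, hj, hij⟩ : ∃ i j, n ≤ i ∧ n ≤ j ∧ m = lw i + lw j := by
    rcases (Nat.succ_le_of_lt ht).eq_or_lt with h | h
    · have hsum := lw_add_le n (n + 1)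
      rw [show n + (n + 1) = t + 1 by omega] at hsum
      have := lw_succ_le n
      exact ⟨n, n + 1, le_rfl, by omega, by omega⟩
    · obtain ⟨i, j, hi, hj, hij⟩ := exists_eq_lw_add_lw_of_gap (n := n) hgap (by omega)
      exact ⟨i, j, hi, hj, by omega⟩
  rw [hij]
  exact add_mem (lw_mem_closure_lwTail hi) (lw_mem_closure_lwTail hj)

theorem frobenius_lower_wythoff_bounds_general (n F : ℕ)
    (hF : FrobeniusNumber F {x : ℕ | ∃ j, n ≤ j ∧ x = lw j}) :
    -3 ≤ (F : ℤ) - 2 * (lw n : ℤ) ∧ (F : ℤ) - 2 * (lw n : ℤ) ≤ 1 := by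
  obtain ⟨hFnot, hFmax⟩ : FrobeniusNumber F (lwTail n) := hF
  have hupper : F ≤ 2 * lw n + 1 := by
    by_contra! h
    exact hFnot (mem_closure_lwTail_of_le (by omega))
  have hlower : 2 * lw n ≤ F + 3 := by
    by_cases hsmall : lw n ≤ 1
    · omega
    obtain ⟨k, hk, hk', hkL⟩ := exists_notMem_range_lw (2 * lw n - 3)
    suffices k ≤ F by omega
    refine hFmax fun hkmem => ?_
    rcases eq_zero_or_mem_or_le_of_mem_closure_lwTail hkmem with h | ⟨j, -, rfl⟩ | h
    · omega
    · exact hkL ⟨j, rfl⟩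
    · omega
  omega

theorem frobenius_lower_wythoff_bounds (n F : ℕ) (hn : 1 ≤ n)
    (hF : FrobeniusNumber F {x : ℕ | ∃ j, n ≤ j ∧ x = lw j}) :
    -3 ≤ (F : ℤ) - 2 * (lw n : ℤ) ∧ (F : ℤ) - 2 * (lw n : ℤ) ≤ 1 :=
  frobenius_lower_wythoff_bounds_general n F hF
end

section
/- For all n ≥ 0, if the Zeckendorf representation of n is the digit string w, then the number whose Zeckendorf digit string is w followed by 0 equals ⌊(n+1)φ⌋ − 1, where φ = (1+√5)/2. Equivalently, Σᵢ aᵢF_{i+1} = ⌊(n+1)φ⌋ − 1 when n = Σᵢ aᵢFᵢ is the Zeckendorf representation of n. -/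
/-!
Binet's formula gives `F (i+1) = φ F i + ψ^i` with `ψ = (1 - √5)/2`, so the shifted digit sum is
`S = φ n + ε` with `ε = ∑ aᵢ ψ^i`. Since `ψ φ = -1` and `1 - ψ = φ`, the map `x ↦ d + ψ x` sends
`(-1, φ)` into itself for every digit `d ∈ [0, 1]`; hence `ε`, whose digits start at index 2, lies in
`ψ² (-1, φ) = (φ - 2, φ - 1)`, and `(n + 1) φ = S + (φ - ε)` with `1 < φ - ε < 2`.
-/

open Finset Real
open scoped goldenRatio

theorem sum_range_succ_mul_pow (b : ℕ → ℝ) (x : ℝ) (T : ℕ) :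
    ∑ i ∈ range (T + 1), b i * x ^ i = b 0 + x * ∑ i ∈ range T, b (i + 1) * x ^ i := by
  rw [sum_range_succ', add_comm, mul_sum]
  simp only [pow_zero, mul_one, pow_succ]
  congr 1
  exact sum_congr rfl fun i _ => by ring

section DigitBounds

variable {b : ℕ → ℝ}

theorem sum_mul_goldenConj_pow_mem_Ioo (hb0 : ∀ i, 0 ≤ b i) (hb1 : ∀ i, b i ≤ 1) (T : ℕ) :
    ∑ i ∈ range T, b i * ψ ^ i ∈ Set.Ioo (-1) φ := by
  induction T generalizing b with
  | zero => exact ⟨by simp, by simpa using goldenRatio_pos⟩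
  | succ T ih =>
    obtain ⟨hlo, hhi⟩ := ih (fun i => hb0 (i + 1)) (fun i => hb1 (i + 1))
    rw [sum_range_succ_mul_pow]
    constructor <;>
      nlinarith [goldenConj_neg, goldenConj_mul_goldenRatio, one_sub_goldenRatio, hb0 0, hb1 0]

theorem sum_mul_goldenConj_pow_mem_Ioo_of_head_eq_zero (hb0 : ∀ i, 0 ≤ b i)
    (hb1 : ∀ i, b i ≤ 1) (h0 : b 0 = 0) (T : ℕ) :
    ∑ i ∈ range T, b i * ψ ^ i ∈ Set.Ioo (-1) (φ - 1) := by
  cases T with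
  | zero => simp [one_lt_goldenRatio]
  | succ T =>
    obtain ⟨hlo, hhi⟩ :=
      sum_mul_goldenConj_pow_mem_Ioo (fun i => hb0 (i + 1)) (fun i => hb1 (i + 1)) T
    rw [sum_range_succ_mul_pow, h0, zero_add]
    constructor <;> nlinarith [goldenConj_neg, goldenConj_mul_goldenRatio, one_sub_goldenRatio]

theorem sum_mul_goldenConj_pow_mem_Ioo_of_first_two_eq_zero (hb0 : ∀ i, 0 ≤ b i)
    (hb1 : ∀ i, b i ≤ 1) (h0 : b 0 = 0) (h1 : b 1 = 0) (T : ℕ) :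
    ∑ i ∈ range T, b i * ψ ^ i ∈ Set.Ioo (φ - 2) (φ - 1) := by
  cases T with
  | zero => simp [one_lt_goldenRatio, goldenRatio_lt_two]
  | succ T =>
    obtain ⟨hlo, hhi⟩ := sum_mul_goldenConj_pow_mem_Ioo_of_head_eq_zero
      (fun i => hb0 (i + 1)) (fun i => hb1 (i + 1)) h1 T
    rw [sum_range_succ_mul_pow, h0, zero_add]
    constructor <;> nlinarith [goldenConj_neg, one_sub_goldenRatio, goldenConj_sq]

end DigitBounds

theorem sum_mul_fib_succ_eq (a : ℕ → ℕ) (T : ℕ) :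
    ((∑ i ∈ range T, a i * Nat.fib (i + 1) : ℕ) : ℝ) =
      φ * ((∑ i ∈ range T, a i * Nat.fib i : ℕ) : ℝ) + ∑ i ∈ range T, (a i : ℝ) * ψ ^ i := by
  push_cast
  rw [mul_sum, ← sum_add_distrib]
  refine sum_congr rfl fun i _ => ?_
  rw [← fib_succ_sub_goldenRatio_mul_fib]
  ring

theorem floor_add_one_mul_goldenRatio_eq {n S : ℕ} {ε : ℝ} (hS : (S : ℝ) = φ * n + ε)
    (hε : ε ∈ Set.Ioo (φ - 2) (φ - 1)) : ⌊((n : ℝ) + 1) * φ⌋₊ = S + 1 := by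
  rw [Nat.floor_eq_iff (by positivity)]
  push_cast
  constructor <;> linarith [hε.1, hε.2]

theorem phi_eq_goldenRatio : phi = φ := rfl

theorem zeckendorf_shift_one_general (n T : ℕ) (a : ℕ → ℕ)
    (hbit : ∀ i, a i ≤ 1)
    (h0 : a 0 = 0) (h1 : a 1 = 0)
    (hrep : n = ∑ i ∈ Finset.range T, a i * Nat.fib i) :
    ∑ i ∈ Finset.range T, a i * Nat.fib (i + 1) = ⌊((n : ℝ) + 1) * phi⌋₊ - 1 := by
  have hε := sum_mul_goldenConj_pow_mem_Ioo_of_first_two_eq_zero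
    (b := fun i => (a i : ℝ)) (fun i => Nat.cast_nonneg _) (fun i => by exact_mod_cast hbit i)
    (by simp [h0]) (by simp [h1]) T
  have hS := sum_mul_fib_succ_eq a T
  subst hrep
  rw [phi_eq_goldenRatio, floor_add_one_mul_goldenRatio_eq hS hε, Nat.add_sub_cancel]

theorem zeckendorf_shift_one (n T : ℕ) (a : ℕ → ℕ)
    (hbit : ∀ i, a i ≤ 1)
    (hnoconsec : ∀ i, a i * a (i + 1) = 0)
    (h0 : a 0 = 0) (h1 : a 1 = 0)
    (hrep : n = ∑ i ∈ Finset.range T, a i * Nat.fib i) :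
    ∑ i ∈ Finset.range T, a i * Nat.fib (i + 1) = ⌊((n : ℝ) + 1) * phi⌋₊ - 1 :=
  zeckendorf_shift_one_general n T a hbit h0 h1 hrep
end

section
/- For every i ≥ 1, the number 2^{2i} + 2^i + 1 cannot be written as a non-negative integer linear combination of the numbers 2^i + 1, 2^{i+1} + 1, …, 2^{2i} + 1 (and more generally of any 2^j + 1 with j ≥ i). -/
theorem not_representable (i : ℕ) (hi : 1 ≤ i) :
    2 ^ (2 * i) + 2 ^ i + 1 ∉
      AddSubmonoid.closure {x : ℕ | ∃ j, i ≤ j ∧ x = 2 ^ j + 1} := by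
  set P : ℕ → Prop := fun n => n = 0 ∨ ∃ k, 1 ≤ k ∧ n ≡ k [MOD 2 ^ i] ∧
      k * (2 ^ i + 1) ≤ n ∧ (k = 1 → ∃ j, i ≤ j ∧ n = 2 ^ j + 1) with hP
  have h2i : 2 ≤ 2 ^ i := by
    calc 2 = 2 ^ 1 := (pow_one 2).symm
      _ ≤ 2 ^ i := Nat.pow_le_pow_right (by norm_num) hi
  have hsq : 2 ^ (2 * i) = 2 ^ i * 2 ^ i := by rw [two_mul, pow_add]
  intro hmem
  have key : P (2 ^ (2 * i) + 2 ^ i + 1) := by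
    refine AddSubmonoid.closure_induction ?_ ?_ ?_ hmem
    · rintro x ⟨j, hj, rfl⟩
      right
      have hij : 2 ^ i ≤ 2 ^ j := Nat.pow_le_pow_right (by norm_num) hj
      refine ⟨1, le_refl 1, ?_, by omega, fun _ => ⟨j, hj, rfl⟩⟩
      have : 2 ^ i ∣ 2 ^ j := pow_dvd_pow 2 hj
      calc 2 ^ j + 1 ≡ 0 + 1 [MOD 2 ^ i] :=
            Nat.ModEq.add_right 1 ((Nat.modEq_zero_iff_dvd).2 this)
        _ = 1 := by ring
    · left; rfl
    · rintro a b _ _ ha hb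
      rcases ha with rfl | ⟨k1, hk1, hm1, hle1, ho1⟩
      · simpa using hb
      rcases hb with rfl | ⟨k2, hk2, hm2, hle2, _⟩
      · right
        exact ⟨k1, hk1, by simpa using hm1, by simpa using hle1, by simpa using ho1⟩
      · right
        refine ⟨k1 + k2, by omega, hm1.add hm2, by nlinarith, fun h => by omega⟩
  rcases key with h0 | ⟨k, hk1, hmod, hle, hone⟩
  · omega
  · have hNmod : (2 ^ (2 * i) + 2 ^ i + 1) % 2 ^ i = 1 := by
      rw [Nat.add_mod, Nat.add_mod (2 ^ (2 * i)), hsq, Nat.mul_mod_left, Nat.mod_self]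
      simp [Nat.mod_eq_of_lt (show 1 < 2 ^ i by omega)]
    have hkmod : k % 2 ^ i = 1 := by
      have := hmod.symm
      unfold Nat.ModEq at this
      rw [hNmod] at this
      omega
    have hklt : k < 2 ^ i + 1 := by nlinarith
    have hk : k = 1 := by
      rcases Nat.lt_or_ge k (2 ^ i) with h | h
      · rwa [Nat.mod_eq_of_lt h] at hkmod
      · have : k = 2 ^ i := by omega
        rw [this, Nat.mod_self] at hkmod; omega
    obtain ⟨j, hj, heq⟩ := hone hk
    have heq2 : 2 ^ (2 * i) + 2 ^ i = 2 ^ j := by omega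
    have hlt1 : 2 ^ (2 * i) < 2 ^ j := by omega
    have hii : 2 ^ i < 2 ^ (2 * i) :=
      Nat.pow_lt_pow_right (by norm_num) (by omega)
    have hlt2 : 2 ^ j < 2 ^ (2 * i + 1) := by rw [pow_succ]; omega
    have h1 : 2 * i < j := (Nat.pow_lt_pow_iff_right (by norm_num)).1 hlt1
    have h2 : j < 2 * i + 1 := (Nat.pow_lt_pow_iff_right (by norm_num)).1 hlt2
    omega
end

section
/- For every i ≥ 1 and every integer x with 2^{2i} + 2^i + 1 < x ≤ 2^{2i} + 2^{i+1} + 2, the number x can be written as a non-negative integer linear combination of the numbers 2^i + 1, 2^{i+1} + 1, …, 2^{2i} + 1. -/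
lemma aux_pow_rep (i : ℕ) : ∀ n r : ℕ, 1 ≤ r → r ≤ 2 ^ n →
    2 ^ (i + n) + r ∈ AddSubmonoid.closure {y : ℕ | ∃ j, i ≤ j ∧ j ≤ i + n ∧ y = 2 ^ j + 1} := by
  intro n
  induction n with
  | zero =>
    intro r h1 h2
    have hr : r = 1 := by omega
    subst hr
    exact AddSubmonoid.subset_closure ⟨i, le_refl i, by omega, by norm_num⟩
  | succ n ih =>
    intro r h1 h2
    rcases eq_or_lt_of_le h1 with h | h
    · exact AddSubmonoid.subset_closure ⟨i + (n + 1), by omega, by omega, by omega⟩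
    · set r1 := min (r - 1) (2 ^ n) with hr1
      set r2 := r - r1 with hr2
      have hpn : 1 ≤ 2 ^ n := Nat.one_le_two_pow
      have h2p : 2 ^ (n + 1) = 2 ^ n + 2 ^ n := by ring
      have hb1 : 1 ≤ r1 ∧ r1 ≤ 2 ^ n := by omega
      have hb2 : 1 ≤ r2 ∧ r2 ≤ 2 ^ n := by omega
      have hmono : AddSubmonoid.closure {y : ℕ | ∃ j, i ≤ j ∧ j ≤ i + n ∧ y = 2 ^ j + 1} ≤
          AddSubmonoid.closure {y : ℕ | ∃ j, i ≤ j ∧ j ≤ i + (n + 1) ∧ y = 2 ^ j + 1} := by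
        apply AddSubmonoid.closure_mono
        rintro y ⟨j, hj1, hj2, hj3⟩
        exact ⟨j, hj1, by omega, hj3⟩
      have m1 := hmono (ih r1 hb1.1 hb1.2)
      have m2 := hmono (ih r2 hb2.1 hb2.2)
      have key : 2 ^ (i + (n + 1)) + r = (2 ^ (i + n) + r1) + (2 ^ (i + n) + r2) := by
        have : 2 ^ (i + (n + 1)) = 2 ^ (i + n) + 2 ^ (i + n) := by ring
        omega
      rw [key]
      exact AddSubmonoid.add_mem _ m1 m2

theorem representable_in_range (i x : ℕ) (hi : 1 ≤ i)
    (hlo : 2 ^ (2 * i) + 2 ^ i + 1 < x) (hhi : x ≤ 2 ^ (2 * i) + 2 ^ (i + 1) + 2) :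
    x ∈ AddSubmonoid.closure {y : ℕ | ∃ j, i ≤ j ∧ j ≤ 2 * i ∧ y = 2 ^ j + 1} := by
  have h2p : 2 ^ (i + 1) = 2 ^ i + 2 ^ i := by ring
  by_cases hx : x = 2 ^ (2 * i) + 2 ^ (i + 1) + 2
  · have hm1 : (2 ^ (2 * i) + 1 : ℕ) ∈ AddSubmonoid.closure
        {y : ℕ | ∃ j, i ≤ j ∧ j ≤ 2 * i ∧ y = 2 ^ j + 1} :=
      AddSubmonoid.subset_closure ⟨2 * i, by omega, le_refl _, rfl⟩
    have hm2 : (2 ^ (i + 1) + 1 : ℕ) ∈ AddSubmonoid.closure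
        {y : ℕ | ∃ j, i ≤ j ∧ j ≤ 2 * i ∧ y = 2 ^ j + 1} :=
      AddSubmonoid.subset_closure ⟨i + 1, by omega, by omega, rfl⟩
    have : x = (2 ^ (2 * i) + 1) + (2 ^ (i + 1) + 1) := by omega
    rw [this]
    exact AddSubmonoid.add_mem _ hm1 hm2
  · set r := x - (2 ^ (2 * i) + 2 ^ i + 1) with hr
    have hrb : 1 ≤ r ∧ r ≤ 2 ^ i := by omega
    have hmono : AddSubmonoid.closure {y : ℕ | ∃ j, i ≤ j ∧ j ≤ i + i ∧ y = 2 ^ j + 1} ≤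
        AddSubmonoid.closure {y : ℕ | ∃ j, i ≤ j ∧ j ≤ 2 * i ∧ y = 2 ^ j + 1} := by
      apply AddSubmonoid.closure_mono
      rintro y ⟨j, hj1, hj2, hj3⟩
      exact ⟨j, hj1, by omega, hj3⟩
    have m1 := hmono (aux_pow_rep i i r hrb.1 hrb.2)
    have m2 : (2 ^ i + 1 : ℕ) ∈ AddSubmonoid.closure
        {y : ℕ | ∃ j, i ≤ j ∧ j ≤ 2 * i ∧ y = 2 ^ j + 1} :=
      AddSubmonoid.subset_closure ⟨i, le_refl _, by omega, rfl⟩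
    have key : x = (2 ^ (i + i) + r) + (2 ^ i + 1) := by
      have : 2 ^ (i + i) = 2 ^ (2 * i) := by ring_nf
      omega
    rw [key]
    exact AddSubmonoid.add_mem _ m1 m2
end

section
/- For every i ≥ 1, every integer x > 2^{2i} + 2^i + 1 can be written as a non-negative integer linear combination of the numbers 2^j + 1 for i ≤ j ≤ 2i; consequently, the Frobenius number of the set {2^j + 1 : j ≥ i} equals 2^{2i} + 2^i + 1. -/
/-!
Write `P = 2 ^ i`. Every `2 ^ j + 1` with `j ≥ i` is `≡ 1 [MOD P]` and at least `P + 1`, so a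
sum of such numbers that is `≡ 1 [MOD P]` and below `(P + 1) ^ 2` has a single summand; as
`P ^ 2 + P` is not a power of two, `P ^ 2 + P + 1` is not representable. Conversely, splitting
`2 ^ (i + k) + 1` into two copies of `2 ^ (i + k - 1) + 1` shows that `n + P * 2 ^ k` is a sum of
`n` generators for `1 ≤ n ≤ 2 ^ k ≤ P`. With `P + 1` and `2 * P + 1` this covers the `P + 1`
consecutive integers following `P ^ 2 + P + 1`, and adding multiples of `P + 1` gives the rest.
-/

theorem sum_modEq_card_of_forall_modEq_one {P : ℕ} {L : Multiset ℕ}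
    (hL : ∀ y ∈ L, y ≡ 1 [MOD P]) : L.sum ≡ Multiset.card L [MOD P] := by
  induction L using Multiset.induction_on with
  | empty => rfl
  | cons y L ih =>
    rw [Multiset.sum_cons, Multiset.card_cons, add_comm _ 1]
    exact (hL y (Multiset.mem_cons_self y L)).add
      (ih fun z hz => hL z (Multiset.mem_cons_of_mem hz))

theorem mem_of_mem_closure_of_modEq_one_of_lt {s : Set ℕ} {P x : ℕ} (hP : 2 ≤ P)
    (hs : ∀ y ∈ s, y ≡ 1 [MOD P] ∧ P + 1 ≤ y) (hx : x ∈ AddSubmonoid.closure s)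
    (hx1 : x ≡ 1 [MOD P]) (hlt : x < (P + 1) * (P + 1)) : x ∈ s := by
  obtain ⟨L, hL, rfl⟩ := AddSubmonoid.exists_multiset_of_mem_closure hx
  have hsum := sum_modEq_card_of_forall_modEq_one fun y hy => (hs y (hL y hy)).1
  have hcard_le : Multiset.card L * (P + 1) ≤ L.sum :=
    Multiset.card_nsmul_le_sum fun y hy => (hs y (hL y hy)).2
  have hcard : Multiset.card L = 1 := by
    have hcard_mod : Multiset.card L % P = 1 := by
      rw [← Nat.mod_eq_of_lt (show 1 < P by omega)]; exact hsum.symm.trans hx1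
    have hcard_le_P : Multiset.card L ≤ P := by
      by_contra! h
      nlinarith
    rcases hcard_le_P.lt_or_eq with h | h
    · rwa [Nat.mod_eq_of_lt h] at hcard_mod
    · simp [h] at hcard_mod
  obtain ⟨y, rfl⟩ := Multiset.card_eq_one.mp hcard
  simpa using hL y (Multiset.mem_singleton_self y)

def twoPowAddOneGens (i : ℕ) : Set ℕ := {y | ∃ j, i ≤ j ∧ j ≤ 2 * i ∧ y = 2 ^ j + 1}

theorem add_two_pow_mem_closure_twoPowAddOneGens {i k n : ℕ} (hk : k ≤ i) (hn : 1 ≤ n)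
    (hnk : n ≤ 2 ^ k) : n + 2 ^ (i + k) ∈ AddSubmonoid.closure (twoPowAddOneGens i) := by
  induction k generalizing n with
  | zero => exact AddSubmonoid.subset_closure ⟨i, le_rfl, by omega, by simp; omega⟩
  | succ k ih =>
    rcases hn.eq_or_lt with rfl | hn
    · exact AddSubmonoid.subset_closure ⟨i + (k + 1), by omega, by omega, by omega⟩
    · have hsplit : n + 2 ^ (i + (k + 1)) =
          (n / 2 + 2 ^ (i + k)) + (n - n / 2 + 2 ^ (i + k)) := by
        rw [← add_assoc, pow_succ]; omega
      rw [pow_succ] at hnk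
      rw [hsplit]
      exact add_mem (ih (by omega) (by omega) (by omega)) (ih (by omega) (by omega) (by omega))

theorem mem_closure_twoPowAddOneGens_of_lt {i x : ℕ} (hi : 1 ≤ i)
    (hx : 2 ^ (2 * i) + 2 ^ i + 1 < x) : x ∈ AddSubmonoid.closure (twoPowAddOneGens i) := by
  have hPP : 2 ^ (i + i) = 2 ^ i * 2 ^ i := pow_add 2 i i
  have hP : 2 ^ i + 1 ∈ AddSubmonoid.closure (twoPowAddOneGens i) :=
    AddSubmonoid.subset_closure ⟨i, le_rfl, by omega, rfl⟩
  have h2P : 2 * 2 ^ i + 1 ∈ AddSubmonoid.closure (twoPowAddOneGens i) :=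
    AddSubmonoid.subset_closure ⟨i + 1, by omega, by omega, by rw [pow_succ, mul_comm]⟩
  have hwindow : ∀ e ≤ 2 ^ i,
      2 ^ i * 2 ^ i + 2 ^ i + 2 + e ∈ AddSubmonoid.closure (twoPowAddOneGens i) := by
    intro e he
    rcases he.lt_or_eq with he | rfl
    · have := add_two_pow_mem_closure_twoPowAddOneGens le_rfl (n := e + 1) (by omega) he
      rw [hPP] at this
      convert add_mem this hP using 1
      ring
    · have := add_two_pow_mem_closure_twoPowAddOneGens (i := i) (n := 1) le_rfl le_rfl
        Nat.one_le_two_pow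
      rw [hPP] at this
      convert add_mem this h2P using 1
      ring
  rw [two_mul, hPP] at hx
  have hdiv := Nat.div_add_mod' (x - (2 ^ i * 2 ^ i + 2 ^ i + 2)) (2 ^ i + 1)
  have hx_eq : x = 2 ^ i * 2 ^ i + 2 ^ i + 2 + (x - (2 ^ i * 2 ^ i + 2 ^ i + 2)) % (2 ^ i + 1) +
      ((x - (2 ^ i * 2 ^ i + 2 ^ i + 2)) / (2 ^ i + 1)) • (2 ^ i + 1) := by
    rw [smul_eq_mul]; omega
  rw [hx_eq]
  exact add_mem (hwindow _ (Nat.lt_succ_iff.mp (Nat.mod_lt _ (Nat.succ_pos _))))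
    (AddSubmonoid.nsmul_mem _ hP _)

theorem two_pow_two_mul_add_two_pow_add_one_notMem_closure {i : ℕ} (hi : 1 ≤ i) :
    2 ^ (2 * i) + 2 ^ i + 1 ∉
      AddSubmonoid.closure {y : ℕ | ∃ j, i ≤ j ∧ y = 2 ^ j + 1} := by
  intro h
  have hP : 2 ≤ 2 ^ i := Nat.le_self_pow (by omega) 2
  have hPP : 2 ^ (2 * i) = 2 ^ i * 2 ^ i := by rw [two_mul, pow_add]
  obtain ⟨j, -, hj⟩ := mem_of_mem_closure_of_modEq_one_of_lt hP
    (by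
      rintro y ⟨j, hij, rfl⟩
      exact ⟨by simpa using (Nat.modEq_zero_iff_dvd.2 (pow_dvd_pow 2 hij)).add_right 1,
        by gcongr; omega⟩)
    h
    (by simpa using (Nat.modEq_zero_iff_dvd.2
      (dvd_add (pow_dvd_pow 2 (by omega : i ≤ 2 * i)) dvd_rfl)).add_right 1)
    (by rw [hPP]; nlinarith)
  have hlo : 2 ^ (2 * i) < 2 ^ j := by omega
  have hhi : 2 ^ j < 2 ^ (2 * i + 1) := by
    rw [pow_succ]
    have : 2 ^ i < 2 ^ (2 * i) := Nat.pow_lt_pow_right (by norm_num) (by omega)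
    omega
  rw [Nat.pow_lt_pow_iff_right (by norm_num)] at hlo hhi
  omega

theorem frobenius_of_two_pow_plus_one (i : ℕ) (hi : 1 ≤ i) :
    (∀ x : ℕ, 2 ^ (2 * i) + 2 ^ i + 1 < x →
      x ∈ AddSubmonoid.closure {y : ℕ | ∃ j, i ≤ j ∧ j ≤ 2 * i ∧ y = 2 ^ j + 1}) ∧
    FrobeniusNumber (2 ^ (2 * i) + 2 ^ i + 1) {y : ℕ | ∃ j, i ≤ j ∧ y = 2 ^ j + 1} := by
  have hgens_subset : twoPowAddOneGens i ⊆ {y : ℕ | ∃ j, i ≤ j ∧ y = 2 ^ j + 1} := by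
    rintro y ⟨j, hij, -, rfl⟩
    exact ⟨j, hij, rfl⟩
  refine ⟨fun x hx => mem_closure_twoPowAddOneGens_of_lt hi hx, frobeniusNumber_iff.2
    ⟨two_pow_two_mul_add_two_pow_add_one_notMem_closure hi, fun x hx => ?_⟩⟩
  exact AddSubmonoid.closure_mono hgens_subset (mem_closure_twoPowAddOneGens_of_lt hi hx)
end
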